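/- arXiv:2201.12957 — 6 statements merged into one kernel-verified Lean document; each statement's English description precedes it below -/
import Mathlib

section
/- Let N ≥ 3 be an integer, let a > −(N−2)²/4 be real, and set β = √(1 + 4a/(N−2)²). Define w : (0,∞) → ℝ by w(r) = (N(N−2)β²)^{(N−2)/4} · (r^{β−1}/(1+r^{2β}))^{(N−2)/2}. Then w is positive and, for every r > 0, −w''(r) − ((N−1)/r)·w'(r) + (a/r²)·w(r) = w(r)^{(N+2)/(N−2)}; that is, the radial profile of the ground state W_a solves the radial equation 𝓛_a u = u^{(N+2)/(N−2)} with 𝓛_a = −Δ + a/|x|². -/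
/-!
With `m = (N-2)/2`, `q = 2β` and `p = (β-1)m`, the profile is `w = C · r^p (1+r^q)^(-m)` with
`C^(4/(N-2)) = N(N-2)β²`. For any profile `r^p (1+r^q)^(-m)` the Euler operator `r d/dr` acts
through the logarithmic derivative `p - mq r^q/(1+r^q)`, and the radial operator comes out in
closed form; when `a = p² + (N-2)p` and `2p + N - 2 = mq` every term cancels except
`m(m+1)q² r^(p+q-2) (1+r^q)^(-m-2)`. This is `(r^p (1+r^q)^(-m))^((N+2)/(N-2))` times
`m(m+1)q² = N(N-2)β² = C^(4/(N-2))`, so multiplying by `C` gives `w^((N+2)/(N-2))`.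
-/

open Filter Topology

noncomputable def bubble (p q m x : ℝ) : ℝ := x ^ p * (1 + x ^ q) ^ (-m)

/-- `𝓛_a = -Δ + a/|x|²` acting on radial functions of `ℝⁿ`. -/
noncomputable def radialOp (n a : ℝ) (u : ℝ → ℝ) (r : ℝ) : ℝ :=
  -(deriv (deriv u) r) - ((n - 1) / r) * deriv u r + (a / r ^ 2) * u r

section bubble

variable {p q m r : ℝ}

lemma bubble_pos (hr : 0 < r) : 0 < bubble p q m r := by
  unfold bubble; positivity

lemma bubble_mul_eq_rpow_div (hr : 0 < r) :
    bubble (p * m) q m r = (r ^ p / (1 + r ^ q)) ^ m := by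
  have hD : 0 < 1 + r ^ q := by positivity
  rw [bubble, Real.div_rpow (by positivity) hD.le, Real.rpow_neg hD.le, ← Real.rpow_mul hr.le,
    div_eq_mul_inv]

lemma bubble_add (hr : 0 < r) (k j : ℝ) :
    bubble (p + k) q (m + j) r = bubble p q m r * r ^ k / (1 + r ^ q) ^ j := by
  have hD : 0 < 1 + r ^ q := by positivity
  simp only [bubble]
  rw [Real.rpow_add hr, neg_add, Real.rpow_add hD, Real.rpow_neg hD.le j]
  ring

lemma bubble_rpow (hr : 0 < r) (t : ℝ) :
    bubble p q m r ^ t = bubble (p * t) q (m * t) r := by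
  have hD : 0 < 1 + r ^ q := by positivity
  rw [bubble, bubble, Real.mul_rpow (by positivity) (by positivity), ← Real.rpow_mul hr.le,
    ← Real.rpow_mul hD.le, neg_mul]

lemma hasDerivAt_bubble (hr : 0 < r) :
    HasDerivAt (bubble p q m) (bubble p q m r / r * (p - m * q * r ^ q / (1 + r ^ q))) r := by
  have hD : 0 < 1 + r ^ q := by positivity
  have h := (Real.hasDerivAt_rpow_const (p := p) (Or.inl hr.ne')).mul
    (((Real.hasDerivAt_rpow_const (p := q) (Or.inl hr.ne')).const_add 1).rpow_const
      (p := -m) (Or.inl hD.ne'))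
  refine h.congr_deriv ?_
  rw [Real.rpow_sub_one hr.ne', Real.rpow_sub_one hr.ne', Real.rpow_sub_one hD.ne', bubble]
  field_simp
  ring

lemma deriv_bubble (hr : 0 < r) :
    deriv (bubble p q m) r = bubble p q m r / r * (p - m * q * r ^ q / (1 + r ^ q)) :=
  (hasDerivAt_bubble hr).deriv

lemma deriv_deriv_bubble (hr : 0 < r) :
    deriv (deriv (bubble p q m)) r = bubble p q m r / r ^ 2 *
      (p * (p - 1) - m * q * (2 * p + q - 1) * r ^ q / (1 + r ^ q) +
        m * (m + 1) * q ^ 2 * (r ^ q / (1 + r ^ q)) ^ 2) := by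
  have hD : 0 < 1 + r ^ q := by positivity
  have hderiv : deriv (bubble p q m) =ᶠ[𝓝 r]
      fun x ↦ bubble p q m x / x * (p - m * q * x ^ q / (1 + x ^ q)) := by
    filter_upwards [Ioi_mem_nhds hr] with x hx using deriv_bubble hx
  have hs := Real.hasDerivAt_rpow_const (p := q) (Or.inl hr.ne')
  have h : HasDerivAt (fun x ↦ bubble p q m x / x * (p - m * q * x ^ q / (1 + x ^ q))) _ r :=
    ((hasDerivAt_bubble hr).div (hasDerivAt_id' r) hr.ne').mul
      (((hs.const_mul (m * q)).div (hs.const_add 1) hD.ne').const_sub p)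
  rw [hderiv.deriv_eq, h.deriv, Pi.div_apply, Real.rpow_sub_one hr.ne']
  field_simp
  ring

end bubble

lemma radialOp_congr {n a r : ℝ} {u v : ℝ → ℝ} (h : u =ᶠ[𝓝 r] v) :
    radialOp n a u r = radialOp n a v r := by
  simp only [radialOp, h.deriv.deriv_eq, h.deriv_eq, h.eq_of_nhds]

lemma radialOp_const_mul (n a c : ℝ) (u : ℝ → ℝ) (r : ℝ) :
    radialOp n a (fun x ↦ c * u x) r = c * radialOp n a u r := by
  simp only [radialOp, deriv_const_mul_field']
  ring

lemma radialOp_bubble {n a p q m r : ℝ} (hr : 0 < r) (ha : a = p ^ 2 + (n - 2) * p)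
    (hpq : 2 * p + n - 2 = m * q) :
    radialOp n a (bubble p q m) r = m * (m + 1) * q ^ 2 * bubble (p + q - 2) q (m + 2) r := by
  have hD : 0 < 1 + r ^ q := by positivity
  rw [radialOp, deriv_deriv_bubble hr, deriv_bubble hr, show p + q - 2 = p + (q - 2) by ring,
    bubble_add hr, Real.rpow_sub hr, Real.rpow_two, Real.rpow_two, ha,
    show n = m * q - 2 * p + 2 by linarith]
  field_simp
  ring

lemma radialOp_const_mul_bubble {n a p q m C t r : ℝ} (hr : 0 < r) (hC : 0 ≤ C)
    (ha : a = p ^ 2 + (n - 2) * p) (hpq : 2 * p + n - 2 = m * q)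
    (hp : p * t = p + q - 2) (hm : m * t = m + 2) (hCt : C ^ t = C * (m * (m + 1) * q ^ 2)) :
    radialOp n a (fun x ↦ C * bubble p q m x) r = (C * bubble p q m r) ^ t := by
  rw [radialOp_const_mul, radialOp_bubble hr ha hpq, Real.mul_rpow hC (bubble_pos hr).le,
    bubble_rpow hr, hCt, hp, hm]
  ring

/-- The radial profile of the ground state `W_a` is positive and solves the
radial equation `𝓛_a u = u^{(N+2)/(N-2)}` with `𝓛_a = -Δ + a/|x|²`. -/
theorem ground_state_solves_radial_equation
    (N : ℕ) (hN : 3 ≤ N) (a : ℝ) (ha : -(((N : ℝ) - 2) ^ 2) / 4 < a)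
    (β : ℝ) (hβ : β = Real.sqrt (1 + 4 * a / ((N : ℝ) - 2) ^ 2))
    (w : ℝ → ℝ)
    (hw : ∀ r : ℝ, w r =
      ((N : ℝ) * ((N : ℝ) - 2) * β ^ 2) ^ (((N : ℝ) - 2) / 4) *
        (r ^ (β - 1) / (1 + r ^ (2 * β))) ^ (((N : ℝ) - 2) / 2)) :
    ∀ r : ℝ, 0 < r →
      0 < w r ∧
      -(deriv (deriv w) r) - (((N : ℝ) - 1) / r) * deriv w r + (a / r ^ 2) * w r
        = w r ^ (((N : ℝ) + 2) / ((N : ℝ) - 2)) := by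
  intro r hr
  have hN' : (3 : ℝ) ≤ N := by exact_mod_cast hN
  set n : ℝ := (N : ℝ)
  have hn : 0 < n - 2 := by linarith
  have hrad : 0 < 1 + 4 * a / (n - 2) ^ 2 := by
    rw [← sub_lt_iff_lt_add', zero_sub, lt_div_iff₀ (by positivity)]
    linarith
  have hβ_sq : β ^ 2 = 1 + 4 * a / (n - 2) ^ 2 := hβ ▸ Real.sq_sqrt hrad.le
  have hK : 0 < n * (n - 2) * β ^ 2 := by
    have := hβ ▸ Real.sqrt_pos.mpr hrad
    positivity
  set C := (n * (n - 2) * β ^ 2) ^ ((n - 2) / 4)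
  have hw_bubble :
      ∀ x, 0 < x → w x = C * bubble ((β - 1) * ((n - 2) / 2)) (2 * β) ((n - 2) / 2) x :=
    fun x hx ↦ by rw [hw x, bubble_mul_eq_rpow_div hx]
  refine ⟨hw_bubble r hr ▸ mul_pos (by positivity) (bubble_pos hr), ?_⟩
  have hC_rpow : C ^ ((n + 2) / (n - 2)) = C * (n * (n - 2) * β ^ 2) := by
    rw [← Real.rpow_mul hK.le, show (n - 2) / 4 * ((n + 2) / (n - 2)) = (n - 2) / 4 + 1 by
      field_simp; ring, Real.rpow_add hK, Real.rpow_one]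
  have hw_near : w =ᶠ[𝓝 r]
      fun x ↦ C * bubble ((β - 1) * ((n - 2) / 2)) (2 * β) ((n - 2) / 2) x := by
    filter_upwards [Ioi_mem_nhds hr] with x hx using hw_bubble x hx
  have ha_β : a = (β ^ 2 - 1) * (n - 2) ^ 2 / 4 := by rw [hβ_sq]; field_simp; ring
  change radialOp n a w r = _
  rw [radialOp_congr hw_near, hw_bubble r hr]
  exact radialOp_const_mul_bubble hr (by positivity) (by rw [ha_β]; ring) (by ring)
    (by field_simp; ring) (by field_simp; ring) (by rw [hC_rpow]; ring)
end

section
/- Let N ≥ 1 be an integer and let p, q, s, w be real numbers with p > 1, q > 1, s > 1, w > 1, q + w > N, and q ≠ N + s. Then there exists a constant C = C(N, p, q, s, w) such that for all real numbers 0 < λ < μ: ∫₀^∞ min((r/λ)^p, (λ/r)^q) · min((r/μ)^s, (μ/r)^w) · r^{N−1} dr ≤ C · max{ λ^q μ^{N−q}, λ^{N+s} μ^{−s} }. -/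
/-!
Bounding each `min` by one of its branches bounds the integrand by a monomial
`λ^α μ^β r^(k-1)`. On each of `(0, λ]`, `(λ, μ]` and `(μ, ∞)` choose the branches whose
monomial is integrable there (`k = N+p+s > 0`, `k = N+s-q ≠ 0`, `k = N-q-w < 0` respectively).
Integrating these monomials gives `λ^(N+s) μ^(-s) / (N+p+s)`, at most
`max(λ^q μ^(N-q), λ^(N+s) μ^(-s)) / |N+s-q|`, and `λ^q μ^(N-q) / (q+w-N)`.
-/

open MeasureTheory Set

theorem integrableOn_and_setIntegral_le_of_nonneg_of_le {α : Type*} [MeasurableSpace α]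
    {μ : Measure α} {s : Set α} {f g : α → ℝ} (hs : MeasurableSet s)
    (hf : AEStronglyMeasurable f (μ.restrict s)) (hf0 : ∀ x ∈ s, 0 ≤ f x)
    (hfg : ∀ x ∈ s, f x ≤ g x) (hg : IntegrableOn g s μ) :
    IntegrableOn f s μ ∧ ∫ x in s, f x ∂μ ≤ ∫ x in s, g x ∂μ := by
  have hfi : IntegrableOn f s μ := hg.mono' hf <| ae_restrict_of_forall_mem hs fun x hx => by
    rw [Real.norm_of_nonneg (hf0 x hx)]
    exact hfg x hx
  exact ⟨hfi, setIntegral_mono_on hfi hg hs hfg⟩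

theorem setIntegral_Ioi_eq_Ioc_add_Ioc_add_Ioi {E : Type*} [NormedAddCommGroup E]
    [NormedSpace ℝ E] {μ : Measure ℝ} {f : ℝ → E} {a b c : ℝ} (hab : a ≤ b)
    (hbc : b ≤ c) (h₁ : IntegrableOn f (Ioc a b) μ) (h₂ : IntegrableOn f (Ioc b c) μ)
    (h₃ : IntegrableOn f (Ioi c) μ) :
    ∫ x in Ioi a, f x ∂μ =
      ∫ x in Ioc a b, f x ∂μ + ∫ x in Ioc b c, f x ∂μ + ∫ x in Ioi c, f x ∂μ := by
  have h₁₂ : IntegrableOn f (Ioc a c) μ := Ioc_union_Ioc_eq_Ioc hab hbc ▸ h₁.union h₂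
  rw [← Ioc_union_Ioi_eq_Ioi (hab.trans hbc), setIntegral_union (Ioc_disjoint_Ioi le_rfl)
    measurableSet_Ioi h₁₂ h₃, ← Ioc_union_Ioc_eq_Ioc hab hbc,
    setIntegral_union (Ioc_disjoint_Ioc_of_le le_rfl) measurableSet_Ioc h₁ h₂]

section PowerIntegrals

variable {a b k : ℝ}

theorem integrableOn_Ioc_zero_rpow_sub_one (ha : 0 ≤ a) (hk : 0 < k) :
    IntegrableOn (fun x : ℝ => x ^ (k - 1)) (Ioc 0 a) :=
  (intervalIntegrable_iff_integrableOn_Ioc_of_le ha).1 <|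
    intervalIntegral.intervalIntegrable_rpow' (by linarith)

theorem integral_Ioc_zero_rpow_sub_one (ha : 0 ≤ a) (hk : 0 < k) :
    ∫ x in Ioc 0 a, x ^ (k - 1) = a ^ k / k := by
  rw [← intervalIntegral.integral_of_le ha, integral_rpow (.inl (by linarith)), sub_add_cancel,
    Real.zero_rpow hk.ne', sub_zero]

theorem integrableOn_Ioc_rpow (ha : 0 < a) (hab : a ≤ b) (e : ℝ) :
    IntegrableOn (fun x : ℝ => x ^ e) (Ioc a b) :=
  (intervalIntegrable_iff_integrableOn_Ioc_of_le hab).1 <|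
    intervalIntegral.intervalIntegrable_rpow (.inr (notMem_uIcc_of_lt ha (ha.trans_le hab)))

theorem integral_Ioc_rpow_sub_one_le (ha : 0 < a) (hab : a ≤ b) (hk : k ≠ 0) :
    ∫ x in Ioc a b, x ^ (k - 1) ≤ max (a ^ k) (b ^ k) / |k| := by
  rw [← intervalIntegral.integral_of_le hab,
    integral_rpow (.inr ⟨by simpa using hk, notMem_uIcc_of_lt ha (ha.trans_le hab)⟩),
    sub_add_cancel]
  calc (b ^ k - a ^ k) / k ≤ |b ^ k - a ^ k| / |k| := by
        rw [← abs_div]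
        exact le_abs_self _
    _ = (max (a ^ k) (b ^ k) - min (a ^ k) (b ^ k)) / |k| := by
        rw [max_sub_min_eq_abs, abs_sub_comm]
    _ ≤ max (a ^ k) (b ^ k) / |k| := by
        gcongr
        exact sub_le_self _ (le_min (by positivity) (Real.rpow_nonneg (ha.le.trans hab) k))

theorem integral_Ioi_rpow_sub_one (hb : 0 < b) (hk : k < 0) :
    ∫ x in Ioi b, x ^ (k - 1) = b ^ k / -k := by
  rw [integral_Ioi_rpow_of_lt (by linarith) hb, sub_add_cancel, neg_div, div_neg]

end PowerIntegrals

theorem min_rpow_div_le_rpow_div {p q r t a : ℝ} (hr : 0 < r) (ht : 0 < t)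
    (ha : a = p ∨ a = -q) : min ((r / t) ^ p) ((t / r) ^ q) ≤ (r / t) ^ a := by
  rcases ha with rfl | rfl
  · exact min_le_left _ _
  · rw [Real.rpow_neg (by positivity), ← Real.inv_rpow (by positivity), inv_div]
    exact min_le_right _ _

noncomputable def twoScaleIntegrand (n p q s w lam mu r : ℝ) : ℝ :=
  min ((r / lam) ^ p) ((lam / r) ^ q) * min ((r / mu) ^ s) ((mu / r) ^ w) * r ^ (n - 1)

section TwoScaleIntegrand

variable {n p q s w lam mu : ℝ}

theorem measurable_twoScaleIntegrand : Measurable (twoScaleIntegrand n p q s w lam mu) := by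
  unfold twoScaleIntegrand
  fun_prop

theorem twoScaleIntegrand_nonneg {r : ℝ} (hr : 0 ≤ r) (hlam : 0 ≤ lam) (hmu : 0 ≤ mu) :
    0 ≤ twoScaleIntegrand n p q s w lam mu r := by
  unfold twoScaleIntegrand
  positivity

theorem twoScaleIntegrand_le_rpow {r a b : ℝ} (hr : 0 < r) (hlam : 0 < lam) (hmu : 0 < mu)
    (ha : a = p ∨ a = -q) (hb : b = s ∨ b = -w) :
    twoScaleIntegrand n p q s w lam mu r ≤ lam ^ (-a) * mu ^ (-b) * r ^ (a + b + n - 1) := by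
  calc twoScaleIntegrand n p q s w lam mu r ≤ (r / lam) ^ a * (r / mu) ^ b * r ^ (n - 1) := by
        unfold twoScaleIntegrand
        gcongr
        · exact min_rpow_div_le_rpow_div hr hlam ha
        · exact min_rpow_div_le_rpow_div hr hmu hb
    _ = lam ^ (-a) * mu ^ (-b) * r ^ (a + b + n - 1) := by
        rw [Real.div_rpow hr.le hlam.le, Real.div_rpow hr.le hmu.le, Real.rpow_neg hlam.le,
          Real.rpow_neg hmu.le, show a + b + n - 1 = a + b + (n - 1) by ring,
          Real.rpow_add hr, Real.rpow_add hr]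
        ring

theorem integrableOn_and_setIntegral_Ioc_zero_twoScaleIntegrand_le (hlam : 0 < lam)
    (hmu : 0 < mu) (hk : 0 < n + p + s) :
    IntegrableOn (twoScaleIntegrand n p q s w lam mu) (Ioc 0 lam) ∧
      ∫ r in Ioc 0 lam, twoScaleIntegrand n p q s w lam mu r
        ≤ lam ^ (n + s) * mu ^ (-s) / (n + p + s) := by
  obtain ⟨hf, hle⟩ := integrableOn_and_setIntegral_le_of_nonneg_of_le measurableSet_Ioc
    measurable_twoScaleIntegrand.aestronglyMeasurable
    (fun r hr => twoScaleIntegrand_nonneg hr.1.le hlam.le hmu.le)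
    (fun r hr => twoScaleIntegrand_le_rpow hr.1 hlam hmu (.inl rfl) (.inl rfl))
    ((integrableOn_Ioc_zero_rpow_sub_one (k := p + s + n) hlam.le (by linarith)).const_mul _)
  refine ⟨hf, hle.trans_eq ?_⟩
  have hpow : lam ^ (-p) * lam ^ (p + s + n) = lam ^ (n + s) := by
    rw [← Real.rpow_add hlam]
    ring_nf
  rw [integral_const_mul, integral_Ioc_zero_rpow_sub_one hlam.le (by linarith), ← hpow]
  ring

theorem integrableOn_and_setIntegral_Ioc_twoScaleIntegrand_le (hlam : 0 < lam)
    (hlm : lam ≤ mu) (hk : n + s - q ≠ 0) :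
    IntegrableOn (twoScaleIntegrand n p q s w lam mu) (Ioc lam mu) ∧
      ∫ r in Ioc lam mu, twoScaleIntegrand n p q s w lam mu r
        ≤ max (lam ^ q * mu ^ (n - q)) (lam ^ (n + s) * mu ^ (-s)) / |n + s - q| := by
  have hmu := hlam.trans_le hlm
  obtain ⟨hf, hle⟩ := integrableOn_and_setIntegral_le_of_nonneg_of_le measurableSet_Ioc
    measurable_twoScaleIntegrand.aestronglyMeasurable
    (fun r hr => twoScaleIntegrand_nonneg (hlam.trans hr.1).le hlam.le hmu.le)
    (fun r hr => twoScaleIntegrand_le_rpow (hlam.trans hr.1) hlam hmu (.inr rfl) (.inl rfl))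
    ((integrableOn_Ioc_rpow hlam hlm _).const_mul _)
  refine ⟨hf, hle.trans ?_⟩
  have hI := integral_Ioc_rpow_sub_one_le hlam hlm hk
  rw [show n + s - q - 1 = -q + s + n - 1 by ring] at hI
  have hc : 0 ≤ lam ^ q * mu ^ (-s) := by positivity
  have hlam_pow : lam ^ q * mu ^ (-s) * lam ^ (n + s - q) = lam ^ (n + s) * mu ^ (-s) := by
    rw [mul_right_comm, ← Real.rpow_add hlam]
    ring_nf
  have hmu_pow : lam ^ q * mu ^ (-s) * mu ^ (n + s - q) = lam ^ q * mu ^ (n - q) := by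
    rw [mul_assoc, ← Real.rpow_add hmu]
    ring_nf
  rw [integral_const_mul, neg_neg, max_comm, ← hlam_pow, ← hmu_pow,
    ← mul_max_of_nonneg _ _ hc, mul_div_assoc]
  exact mul_le_mul_of_nonneg_left hI hc

theorem integrableOn_and_setIntegral_Ioi_twoScaleIntegrand_le (hlam : 0 < lam)
    (hmu : 0 < mu) (hk : n < q + w) :
    IntegrableOn (twoScaleIntegrand n p q s w lam mu) (Ioi mu) ∧
      ∫ r in Ioi mu, twoScaleIntegrand n p q s w lam mu r
        ≤ lam ^ q * mu ^ (n - q) / (q + w - n) := by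
  obtain ⟨hf, hle⟩ := integrableOn_and_setIntegral_le_of_nonneg_of_le measurableSet_Ioi
    measurable_twoScaleIntegrand.aestronglyMeasurable
    (fun r hr => twoScaleIntegrand_nonneg (hmu.trans hr).le hlam.le hmu.le)
    (fun r hr => twoScaleIntegrand_le_rpow (hmu.trans hr) hlam hmu (.inr rfl) (.inr rfl))
    ((integrableOn_Ioi_rpow_of_lt (a := -q + -w + n - 1) (by linarith) hmu).const_mul _)
  refine ⟨hf, hle.trans_eq ?_⟩
  have hpow : mu ^ (-(-w)) * mu ^ (-q + -w + n) = mu ^ (n - q) := by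
    rw [← Real.rpow_add hmu]
    ring_nf
  rw [integral_const_mul, integral_Ioi_rpow_sub_one hmu (by linarith), neg_neg, ← hpow]
  ring

end TwoScaleIntegrand

theorem min_min_integral_estimate_general
    (N : ℕ) (p q s w : ℝ)
    (hp : 1 < p) (hs : 1 < s)
    (hqw : (N : ℝ) < q + w) (hq' : q ≠ (N : ℝ) + s) :
    ∃ C : ℝ, 0 < C ∧ ∀ lam mu : ℝ, 0 < lam → lam < mu →
      (∫ r in Set.Ioi (0 : ℝ),
          min ((r / lam) ^ p) ((lam / r) ^ q) *
            min ((r / mu) ^ s) ((mu / r) ^ w) * r ^ ((N : ℝ) - 1))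
        ≤ C * max (lam ^ q * mu ^ ((N : ℝ) - q)) (lam ^ ((N : ℝ) + s) * mu ^ (-s)) := by
  have h₁ : 0 < (N : ℝ) + p + s := by positivity
  have h₂ : 0 < |(N : ℝ) + s - q| := abs_pos.2 (sub_ne_zero.2 hq'.symm)
  have h₃ : 0 < q + w - N := sub_pos.2 hqw
  refine ⟨1 / ((N : ℝ) + p + s) + 1 / |(N : ℝ) + s - q| + 1 / (q + w - N), by positivity,
    fun lam mu hlam hlm => ?_⟩
  have hmu : 0 < mu := hlam.trans hlm
  obtain ⟨hf₁, hI₁⟩ :=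
    integrableOn_and_setIntegral_Ioc_zero_twoScaleIntegrand_le (q := q) (w := w) hlam hmu h₁
  obtain ⟨hf₂, hI₂⟩ :=
    integrableOn_and_setIntegral_Ioc_twoScaleIntegrand_le (p := p) (w := w) hlam hlm.le
      (abs_pos.1 h₂)
  obtain ⟨hf₃, hI₃⟩ :=
    integrableOn_and_setIntegral_Ioi_twoScaleIntegrand_le (p := p) (s := s) hlam hmu hqw
  set M := max (lam ^ q * mu ^ ((N : ℝ) - q)) (lam ^ ((N : ℝ) + s) * mu ^ (-s))
  change ∫ r in Ioi 0, twoScaleIntegrand N p q s w lam mu r ≤ _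
  rw [setIntegral_Ioi_eq_Ioc_add_Ioc_add_Ioi hlam.le hlm.le hf₁ hf₂ hf₃]
  calc _ ≤ M / ((N : ℝ) + p + s) + M / |(N : ℝ) + s - q| + M / (q + w - N) := by
        gcongr
        · exact hI₁.trans (div_le_div_of_nonneg_right (le_max_right _ _) h₁.le)
        · exact hI₃.trans (div_le_div_of_nonneg_right (le_max_left _ _) h₃.le)
    _ = _ := by ring

/-- The basic convolution-type estimate for products of two bump profiles at
different scales. -/
theorem min_min_integral_estimate
    (N : ℕ) (hN : 1 ≤ N) (p q s w : ℝ)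
    (hp : 1 < p) (hq : 1 < q) (hs : 1 < s) (hw : 1 < w)
    (hqw : (N : ℝ) < q + w) (hq' : q ≠ (N : ℝ) + s) :
    ∃ C : ℝ, 0 < C ∧ ∀ lam mu : ℝ, 0 < lam → lam < mu →
      (∫ r in Set.Ioi (0 : ℝ),
          min ((r / lam) ^ p) ((lam / r) ^ q) *
            min ((r / mu) ^ s) ((mu / r) ^ w) * r ^ ((N : ℝ) - 1))
        ≤ C * max (lam ^ q * mu ^ ((N : ℝ) - q)) (lam ^ ((N : ℝ) + s) * mu ^ (-s)) :=
  min_min_integral_estimate_general N p q s w hp hs hqw hq'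
end

section
/- Let N ≥ 5 and J ≥ 1 be integers. Then there exists a constant C = C(N, J) such that for all real numbers y₁, …, y_J and h: | ((N−2)/(2N)) |Σ_{j=1}^{J} y_j + h|^{2N/(N−2)} − ((N−2)/(2N)) Σ_{j=1}^{J} |y_j|^{2N/(N−2)} − Σ_{j=1}^{J} |y_j|^{4/(N−2)} y_j h − Σ_{1 ≤ j ≠ k ≤ J} |y_j|^{4/(N−2)} y_j y_k | ≤ C ( Σ_{1 ≤ j < k ≤ J} ( min{ |y_j|^{4/(N−2)} y_k², |y_k|^{4/(N−2)} y_j² } + min{ |y_j|^{(N+2)/(N−2)} |y_k|, |y_k|^{(N+2)/(N−2)} |y_j| } ) + |h|^{2N/(N−2)} + Σ_{j=1}^{J} |y_j|^{4/(N−2)} h² ). -/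
/-!
Write `p = 2N/(N-2)`, `F(x) = |x|^p / p` and `f(x) = |x|^(p-2) x`. Then `F' = f` and
`f' = (p-1)|x|^(p-2)`, so two applications of the mean value theorem give the second-order
bound `|F(a+b) - F(a) - f(a) b| ≲ |a|^(p-2) b² + |b|^p`.

Let `y_m` be a bump of largest amplitude. The quantity to be estimated is the Taylor remainder of
`F` at `y_m` with increment `b = h + ∑_{j≠m} y_j`, minus the terms
`F(y_j) + f(y_j) (∑_k y_k + h - y_j)` for `j ≠ m`. Because `|y_j| ≤ |y_m|`, each of
`|y_m|^(p-2) y_j²`, `|y_j|^(p-1) |y_m|` and `|y_j|^p` is dominated by the interaction of the pair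
`(y_j, y_m)`; what is left involves only `h` and is absorbed by `|h|^p` and `|y_j|^(p-2) h²`.
-/

open Real Finset Asymptotics Filter Topology

lemma abs_rpow_eq_rpow_sub_two_mul_sq {p : ℝ} (hp : p ≠ 0) (x : ℝ) :
    |x| ^ p = |x| ^ (p - 2) * x ^ 2 := by
  rw [rpow_of_add_eq (abs_nonneg x) hp (sub_add_cancel p 2), rpow_two, sq_abs]

lemma abs_rpow_eq_rpow_sub_one_mul {p : ℝ} (hp : p ≠ 0) (x : ℝ) :
    |x| ^ p = |x| ^ (p - 1) * |x| := by
  rw [rpow_of_add_eq (abs_nonneg x) hp (sub_add_cancel p 1), rpow_one]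

lemma add_rpow_le_two_rpow_mul_rpow_add_rpow {u v r : ℝ} (hu : 0 ≤ u) (hv : 0 ≤ v)
    (hr : 0 ≤ r) : (u + v) ^ r ≤ 2 ^ r * (u ^ r + v ^ r) := calc
  (u + v) ^ r ≤ (2 * max u v) ^ r := by
    gcongr; rw [two_mul]; exact add_le_add (le_max_left _ _) (le_max_right _ _)
  _ = 2 ^ r * (max u v) ^ r := mul_rpow zero_le_two (le_max_of_le_left hu)
  _ ≤ 2 ^ r * (u ^ r + v ^ r) := by
    gcongr
    rcases le_total u v with h | h
    · rw [max_eq_right h]; exact le_add_of_nonneg_left (by positivity)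
    · rw [max_eq_left h]; exact le_add_of_nonneg_right (by positivity)

lemma hasDerivAt_abs_rpow_mul_self {q : ℝ} (hq : 0 < q) (x : ℝ) :
    HasDerivAt (fun x => |x| ^ q * x) ((q + 1) * |x| ^ q) x := by
  rcases eq_or_ne x 0 with rfl | hx
  · rw [abs_zero, zero_rpow hq.ne', mul_zero, hasDerivAt_iff_isLittleO_nhds_zero]
    have hsmall : (fun t : ℝ => |t| ^ q) =o[𝓝 0] (fun _ => (1 : ℝ)) := by
      rw [isLittleO_one_iff]
      simpa [zero_rpow hq.ne'] using
        ((continuous_abs.rpow_const fun _ => Or.inr hq.le).tendsto 0)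
    simpa using hsmall.mul_isBigO (isBigO_refl (fun t : ℝ => t) _)
  · refine (((hasDerivAt_abs hx).rpow_const (p := q) (Or.inl (abs_ne_zero.2 hx))).mul
      (hasDerivAt_id' x)).congr_deriv ?_
    have hsign : (SignType.sign x : ℝ) * x = |x| := sign_mul_self x
    have hpow : |x| ^ (q - 1) * |x| = |x| ^ q := by
      rw [rpow_sub_one (abs_ne_zero.2 hx), div_mul_cancel₀ _ (abs_ne_zero.2 hx)]
    linear_combination q * |x| ^ (q - 1) * hsign + q * hpow

lemma abs_rpow_mul_self_sub_le {q : ℝ} (hq : 0 < q) {a x r : ℝ} (hx : |x - a| ≤ r) :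
    |(|x| ^ q * x) - |a| ^ q * a| ≤ (q + 1) * (|a| + r) ^ q * |x - a| := by
  have hball : ∀ z ∈ Metric.closedBall a r, ‖(q + 1) * |z| ^ q‖ ≤ (q + 1) * (|a| + r) ^ q := by
    intro z hz
    rw [Metric.mem_closedBall, dist_eq] at hz
    have := abs_sub_abs_le_abs_sub z a
    rw [norm_of_nonneg (by positivity)]
    gcongr
    linarith
  exact (convex_closedBall a r).norm_image_sub_le_of_norm_hasDerivWithin_le
    (fun z _ => (hasDerivAt_abs_rpow_mul_self hq z).hasDerivWithinAt) hball
    (Metric.mem_closedBall_self ((abs_nonneg _).trans hx)) (by rwa [Metric.mem_closedBall, dist_eq])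

lemma abs_rpow_taylor_remainder_le {p : ℝ} (hp : 2 < p) (a b : ℝ) :
    |p⁻¹ * |a + b| ^ p - p⁻¹ * |a| ^ p - |a| ^ (p - 2) * a * b|
      ≤ (p - 1) * 2 ^ (p - 2) * (|a| ^ (p - 2) * b ^ 2 + |b| ^ p) := by
  set f : ℝ → ℝ := fun x => |x| ^ (p - 2) * x
  have hψ : ∀ x, HasDerivAt (fun x => p⁻¹ * |x| ^ p - f a * x) (f x - f a) x := fun x => by
    refine (((hasDerivAt_abs_rpow x (by linarith)).const_mul p⁻¹).sub
      ((hasDerivAt_id' x).const_mul (f a))).congr_deriv ?_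
    simp only [f]; field_simp [(by linarith : p ≠ 0)]
  have hf : ∀ x ∈ Metric.closedBall a |b|,
      ‖f x - f a‖ ≤ (p - 1) * (|a| + |b|) ^ (p - 2) * |b| := fun x hx => by
    rw [Metric.mem_closedBall, dist_eq] at hx
    calc ‖f x - f a‖ ≤ (p - 2 + 1) * (|a| + |b|) ^ (p - 2) * |x - a| :=
          abs_rpow_mul_self_sub_le (sub_pos.2 hp) hx
      _ ≤ (p - 1) * (|a| + |b|) ^ (p - 2) * |b| := by
          rw [show p - 2 + 1 = p - 1 by ring]
          exact mul_le_mul_of_nonneg_left hx (mul_nonneg (by linarith) (by positivity))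
  have hmvt := (convex_closedBall a |b|).norm_image_sub_le_of_norm_hasDerivWithin_le
    (fun z _ => (hψ z).hasDerivWithinAt) hf (Metric.mem_closedBall_self (abs_nonneg b))
    (y := a + b) (by simp [Metric.mem_closedBall])
  have hsplit : (|a| + |b|) ^ (p - 2) ≤ 2 ^ (p - 2) * (|a| ^ (p - 2) + |b| ^ (p - 2)) :=
    add_rpow_le_two_rpow_mul_rpow_add_rpow (abs_nonneg a) (abs_nonneg b) (by linarith)
  calc |p⁻¹ * |a + b| ^ p - p⁻¹ * |a| ^ p - |a| ^ (p - 2) * a * b|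
      = ‖(p⁻¹ * |a + b| ^ p - f a * (a + b)) - (p⁻¹ * |a| ^ p - f a * a)‖ := by
        rw [norm_eq_abs]; simp only [f]; ring_nf
    _ ≤ (p - 1) * (|a| + |b|) ^ (p - 2) * |b| * ‖a + b - a‖ := hmvt
    _ = (p - 1) * (|a| + |b|) ^ (p - 2) * b ^ 2 := by
        rw [add_sub_cancel_left, norm_eq_abs, mul_assoc, abs_mul_abs_self, sq]
    _ ≤ (p - 1) * (2 ^ (p - 2) * (|a| ^ (p - 2) + |b| ^ (p - 2))) * b ^ 2 := by
        gcongr; linarith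
    _ = (p - 1) * 2 ^ (p - 2) * (|a| ^ (p - 2) * b ^ 2 + |b| ^ p) := by
        rw [abs_rpow_eq_rpow_sub_two_mul_sq (by linarith : p ≠ 0) b]; ring

noncomputable def pairInteraction (p u v : ℝ) : ℝ :=
  min (|u| ^ (p - 2) * v ^ 2) (|v| ^ (p - 2) * u ^ 2)
    + min (|u| ^ (p - 1) * |v|) (|v| ^ (p - 1) * |u|)

namespace pairInteraction

variable {p u v : ℝ}

lemma comm (p u v : ℝ) : pairInteraction p u v = pairInteraction p v u := by
  simp only [pairInteraction, min_comm]

lemma nonneg (p u v : ℝ) : 0 ≤ pairInteraction p u v := by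
  unfold pairInteraction; positivity

lemma rpow_mul_sq_le (hp4 : p ≤ 4) (huv : |u| ≤ |v|) :
    |v| ^ (p - 2) * u ^ 2 ≤ pairInteraction p u v := by
  have hsmall : |v| ^ (p - 2) * u ^ 2 ≤ |u| ^ (p - 2) * v ^ 2 := by
    rcases eq_or_ne u 0 with rfl | hu
    · rw [zero_pow two_ne_zero, mul_zero]
      positivity
    have hu' : 0 < |u| := abs_pos.2 hu
    have hv' : 0 < |v| := hu'.trans_le huv
    rw [← sq_abs u, ← sq_abs v, ← rpow_two, ← rpow_two,
      rpow_of_add_eq hu'.le two_ne_zero (add_sub_cancel (p - 2) 2),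
      rpow_of_add_eq hv'.le two_ne_zero (add_sub_cancel (p - 2) 2), mul_left_comm]
    gcongr
    linarith
  unfold pairInteraction
  exact le_add_of_le_of_nonneg (le_min hsmall le_rfl) (by positivity)

lemma rpow_mul_abs_le (hp2 : 2 ≤ p) (huv : |u| ≤ |v|) :
    |u| ^ (p - 1) * |v| ≤ pairInteraction p u v := by
  have hsmall : |u| ^ (p - 1) * |v| ≤ |v| ^ (p - 1) * |u| := by
    have hp : p - 1 ≠ 0 := by linarith
    rw [abs_rpow_eq_rpow_sub_one_mul hp u, abs_rpow_eq_rpow_sub_one_mul hp v, sub_sub,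
      one_add_one_eq_two, mul_right_comm, mul_assoc, mul_assoc]
    gcongr
  unfold pairInteraction
  exact le_add_of_nonneg_of_le (by positivity) (le_min le_rfl hsmall)

lemma abs_rpow_le (hp2 : 2 ≤ p) (huv : |u| ≤ |v|) : |u| ^ p ≤ pairInteraction p u v :=
  calc |u| ^ p = |u| ^ (p - 1) * |u| := abs_rpow_eq_rpow_sub_one_mul (by linarith) u
    _ ≤ |u| ^ (p - 1) * |v| := by gcongr
    _ ≤ pairInteraction p u v := rpow_mul_abs_le hp2 huv

end pairInteraction

lemma abs_offDiag_term_le {p u v s h K : ℝ} (hp : 2 ≤ p) (huv : |u| ≤ |v|)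
    (hs : |s| ≤ |h| + K * |v|) (hK : 0 ≤ K) :
    |p⁻¹ * |u| ^ p + |u| ^ (p - 2) * u * s|
      ≤ (K + 1) * pairInteraction p u v + |u| ^ (p - 2) * h ^ 2 := by
  have hG₁ := pairInteraction.abs_rpow_le hp huv
  have hG₂ := pairInteraction.rpow_mul_abs_le hp huv
  have hpinv : p⁻¹ ≤ 2⁻¹ := inv_anti₀ two_pos hp
  have hu0 : 0 ≤ |u| ^ (p - 2) := by positivity
  have hpow : |u| ^ (p - 1) = |u| ^ (p - 2) * |u| := by
    rw [← rpow_add_one' (abs_nonneg u) (by linarith)]; ring_nf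
  have hamgm : |u| ^ (p - 1) * |h| ≤ (|u| ^ p + |u| ^ (p - 2) * h ^ 2) / 2 := by
    have := two_mul_le_add_sq |u| |h|
    rw [hpow, abs_rpow_eq_rpow_sub_two_mul_sq (p := p) (by linarith) u, ← sq_abs u, ← sq_abs h]
    nlinarith
  have hs' : |u| ^ (p - 1) * |s| ≤ |u| ^ (p - 1) * |h| + K * (|u| ^ (p - 1) * |v|) := by
    have : 0 ≤ |u| ^ (p - 1) := by positivity
    nlinarith
  calc |p⁻¹ * |u| ^ p + |u| ^ (p - 2) * u * s|
      ≤ p⁻¹ * |u| ^ p + |u| ^ (p - 1) * |s| := by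
        refine (abs_add_le _ _).trans_eq ?_
        rw [abs_of_nonneg (by positivity), abs_mul, abs_mul, abs_of_nonneg hu0, hpow]
    _ ≤ 2⁻¹ * |u| ^ p + (|u| ^ (p - 1) * |h| + K * (|u| ^ (p - 1) * |v|)) := by
        gcongr
    _ ≤ (K + 1) * pairInteraction p u v + |u| ^ (p - 2) * h ^ 2 := by
        nlinarith

section

variable {ι : Type*} [Fintype ι]

lemma sum_erase_le_sum_pairs [LinearOrder ι] {G : ι → ι → ℝ} (hG : ∀ j k, G j k = G k j)
    (hG0 : ∀ j k, 0 ≤ G j k) (m : ι) :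
    ∑ j ∈ univ.erase m, G j m ≤ ∑ j, ∑ k, if j < k then G j k else 0 := by
  have hrow : ∀ j k, 0 ≤ if j < k then G j k else 0 := fun j k => by
    split_ifs
    exacts [hG0 j k, le_rfl]
  calc ∑ j ∈ univ.erase m, G j m
      = ∑ j ∈ univ.erase m, ((if j < m then G j m else 0) + if m < j then G m j else 0) := by
        refine sum_congr rfl fun j hj => ?_
        rcases lt_or_gt_of_ne (ne_of_mem_erase hj) with hjm | hmj
        · simp [hjm, hjm.not_gt]
        · simp [hmj, hmj.not_gt, hG j m]
    _ ≤ ∑ j ∈ univ.erase m, (∑ k, if j < k then G j k else 0)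
          + ∑ k, if m < k then G m k else 0 := by
        rw [sum_add_distrib]
        exact add_le_add (sum_le_sum fun j _ => single_le_sum (fun k _ => hrow j k) (mem_univ m))
          (sum_le_sum_of_subset_of_nonneg (subset_univ _) fun k _ _ => hrow m k)
    _ = ∑ j, ∑ k, if j < k then G j k else 0 := by
        rw [add_comm]
        exact add_sum_erase _ (fun j => ∑ k, if j < k then G j k else 0) (mem_univ m)

lemma sum_sum_ite_ne_mul_eq (a y : ι → ℝ) [DecidableEq ι] :
    ∑ j, ∑ k, (if j ≠ k then a j * y k else 0) = ∑ j, a j * (∑ k, y k - y j) := by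
  refine sum_congr rfl fun j _ => ?_
  rw [← sum_filter, filter_ne, ← mul_sum, sum_erase_eq_sub (mem_univ j)]

lemma abs_sum_add_sub_le {y : ι → ℝ} {m : ι} (hm : ∀ j, |y j| ≤ |y m|) (h : ℝ) (j : ι) :
    |∑ k, y k + h - y j| ≤ |h| + (Fintype.card ι + 1) * |y m| := by
  have hS : |∑ k, y k| ≤ Fintype.card ι * |y m| :=
    (abs_sum_le_sum_abs _ _).trans (by simpa using sum_le_card_nsmul univ _ _ fun k _ => hm k)
  have := abs_sub (∑ k, y k + h) (y j)
  have := abs_add_le (∑ k, y k) h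
  linarith [hm j]

end

section

variable {ι : Type*} [Fintype ι] [DecidableEq ι]

lemma expansion_eq_remainder_sub_sum_erase (F : ℝ → ℝ) (a y : ι → ℝ) (h : ℝ) (m : ι) :
    F (∑ j, y j + h) - ∑ j, F (y j) - ∑ j, a j * h
        - ∑ j, ∑ k, (if j ≠ k then a j * y k else 0)
      = (F (y m + (∑ j ∈ univ.erase m, y j + h)) - F (y m)
          - a m * (∑ j ∈ univ.erase m, y j + h))
        - ∑ j ∈ univ.erase m, (F (y j) + a j * (∑ k, y k + h - y j)) := by
  have hS : ∑ j ∈ univ.erase m, y j = ∑ j, y j - y m := sum_erase_eq_sub (mem_univ m)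
  rw [sum_sum_ite_ne_mul_eq, hS]
  set S := ∑ j, y j
  have hsplit : ∀ j, F (y j) + a j * (S + h - y j) = F (y j) + a j * h + a j * (S - y j) :=
    fun j => by ring
  rw [← add_sum_erase _ (fun j => F (y j)) (mem_univ m),
    ← add_sum_erase _ (fun j => a j * h) (mem_univ m),
    ← add_sum_erase _ (fun j => a j * (S - y j)) (mem_univ m)]
  simp only [hsplit, sum_add_distrib]
  ring_nf

lemma sum_comp_update_eq (g : ℝ → ℝ) (y : ι → ℝ) (m : ι) (h : ℝ) :
    ∑ j, g (Function.update y m h j) = g h + ∑ j ∈ univ.erase m, g (y j) := by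
  rw [← add_sum_erase _ _ (mem_univ m), Function.update_self]
  congr 1
  exact sum_congr rfl fun j hj => by rw [Function.update_of_ne (ne_of_mem_erase hj)]

variable {p : ℝ} {y : ι → ℝ} {m : ι}

lemma rpow_mul_sq_sum_erase_add_le (hp4 : p ≤ 4) (hm : ∀ j, |y j| ≤ |y m|) (h : ℝ) :
    |y m| ^ (p - 2) * (∑ j ∈ univ.erase m, y j + h) ^ 2
      ≤ Fintype.card ι * (|y m| ^ (p - 2) * h ^ 2
          + ∑ j ∈ univ.erase m, pairInteraction p (y j) (y m)) := by
  have hcs : (∑ j ∈ univ.erase m, y j + h) ^ 2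
      ≤ Fintype.card ι * (h ^ 2 + ∑ j ∈ univ.erase m, y j ^ 2) := by
    rw [add_comm, ← sum_comp_update_eq (fun x => x), ← sum_comp_update_eq (· ^ 2)]
    exact sq_sum_le_card_mul_sum_sq
  have hpair : ∑ j ∈ univ.erase m, |y m| ^ (p - 2) * y j ^ 2
      ≤ ∑ j ∈ univ.erase m, pairInteraction p (y j) (y m) :=
    sum_le_sum fun j _ => pairInteraction.rpow_mul_sq_le hp4 (hm j)
  calc |y m| ^ (p - 2) * (∑ j ∈ univ.erase m, y j + h) ^ 2
      ≤ |y m| ^ (p - 2) * (Fintype.card ι * (h ^ 2 + ∑ j ∈ univ.erase m, y j ^ 2)) := by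
        gcongr
    _ = Fintype.card ι * (|y m| ^ (p - 2) * h ^ 2
          + ∑ j ∈ univ.erase m, |y m| ^ (p - 2) * y j ^ 2) := by
        rw [← mul_sum]; ring
    _ ≤ _ := by gcongr

lemma abs_sum_erase_add_rpow_le (hp : 2 ≤ p) (hm : ∀ j, |y j| ≤ |y m|) (h : ℝ) :
    |∑ j ∈ univ.erase m, y j + h| ^ p
      ≤ Fintype.card ι ^ (p - 1) * (|h| ^ p
          + ∑ j ∈ univ.erase m, pairInteraction p (y j) (y m)) := by
  have hpow : |∑ j ∈ univ.erase m, y j + h| ^ p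
      ≤ Fintype.card ι ^ (p - 1) * (|h| ^ p + ∑ j ∈ univ.erase m, |y j| ^ p) := by
    rw [add_comm, ← sum_comp_update_eq (fun x => x), ← sum_comp_update_eq (|·| ^ p)]
    calc |∑ j, Function.update y m h j| ^ p
        ≤ (∑ j, |Function.update y m h j|) ^ p := by
          gcongr; exact abs_sum_le_sum_abs _ _
      _ ≤ _ := rpow_sum_le_const_mul_sum_rpow _ _ (by linarith)
  refine hpow.trans ?_
  gcongr with j
  exact pairInteraction.abs_rpow_le hp (hm j)

lemma abs_taylor_remainder_at_max_le (hp : 2 < p) (hp4 : p ≤ 4) (hm : ∀ j, |y j| ≤ |y m|)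
    (h : ℝ) :
    |p⁻¹ * |y m + (∑ j ∈ univ.erase m, y j + h)| ^ p - p⁻¹ * |y m| ^ p
        - |y m| ^ (p - 2) * y m * (∑ j ∈ univ.erase m, y j + h)|
      ≤ (p - 1) * 2 ^ (p - 2)
        * (Fintype.card ι * (|y m| ^ (p - 2) * h ^ 2
            + ∑ j ∈ univ.erase m, pairInteraction p (y j) (y m))
          + Fintype.card ι ^ (p - 1) * (|h| ^ p
            + ∑ j ∈ univ.erase m, pairInteraction p (y j) (y m))) := by
  refine (abs_rpow_taylor_remainder_le hp _ _).trans ?_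
  have hc : 0 ≤ (p - 1) * 2 ^ (p - 2) := mul_nonneg (by linarith) (by positivity)
  gcongr _ * (?_ + ?_)
  exacts [rpow_mul_sq_sum_erase_add_le hp4 hm h, abs_sum_erase_add_rpow_le hp.le hm h]

lemma sum_abs_offDiag_term_le (hp : 2 ≤ p) (hm : ∀ j, |y j| ≤ |y m|) (h : ℝ) :
    ∑ j ∈ univ.erase m, |p⁻¹ * |y j| ^ p + |y j| ^ (p - 2) * y j * (∑ k, y k + h - y j)|
      ≤ (Fintype.card ι + 2) * ∑ j ∈ univ.erase m, pairInteraction p (y j) (y m)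
        + ∑ j ∈ univ.erase m, |y j| ^ (p - 2) * h ^ 2 := by
  rw [mul_sum, ← sum_add_distrib]
  refine sum_le_sum fun j _ => ?_
  rw [show (Fintype.card ι + 2 : ℝ) = Fintype.card ι + 1 + 1 by ring]
  exact abs_offDiag_term_le hp (hm j) (abs_sum_add_sub_le hm h j) (by positivity)

end

noncomputable def expansionConst (p n : ℝ) : ℝ :=
  (p - 1) * 2 ^ (p - 2) * (n + n ^ (p - 1)) + n + 2

lemma two_le_expansionConst {p n : ℝ} (hp : 1 ≤ p) (hn : 0 ≤ n) : 2 ≤ expansionConst p n := by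
  have : 0 ≤ (p - 1) * 2 ^ (p - 2) * (n + n ^ (p - 1)) :=
    mul_nonneg (mul_nonneg (by linarith) (by positivity)) (by positivity)
  unfold expansionConst
  linarith

section

variable {ι : Type*} [Fintype ι] [LinearOrder ι] {p : ℝ}

lemma abs_potential_expansion_le_of_max (hp : 2 < p) (hp4 : p ≤ 4) {y : ι → ℝ} {m : ι}
    (hm : ∀ j, |y j| ≤ |y m|) (h : ℝ) :
    |p⁻¹ * |∑ j, y j + h| ^ p - p⁻¹ * ∑ j, |y j| ^ p - ∑ j, |y j| ^ (p - 2) * y j * h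
        - ∑ j, ∑ k, (if j ≠ k then |y j| ^ (p - 2) * y j * y k else 0)|
      ≤ expansionConst p (Fintype.card ι)
        * ((∑ j, ∑ k, if j < k then pairInteraction p (y j) (y k) else 0) + |h| ^ p
          + ∑ j, |y j| ^ (p - 2) * h ^ 2) := by
  set n : ℝ := (Fintype.card ι : ℝ)
  set T := ∑ j, ∑ k, if j < k then pairInteraction p (y j) (y k) else 0
  set R := ∑ j, |y j| ^ (p - 2) * h ^ 2
  set c := (p - 1) * 2 ^ (p - 2)
  have hc : 0 ≤ c := mul_nonneg (by linarith) (by positivity)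
  have hid := expansion_eq_remainder_sub_sum_erase (fun x => p⁻¹ * |x| ^ p)
    (fun j => |y j| ^ (p - 2) * y j) y h m
  beta_reduce at hid
  rw [mul_sum, hid]
  have hPT : ∑ j ∈ univ.erase m, pairInteraction p (y j) (y m) ≤ T :=
    sum_erase_le_sum_pairs (G := fun j k => pairInteraction p (y j) (y k))
      (fun _ _ => pairInteraction.comm p _ _) (fun _ _ => pairInteraction.nonneg p _ _) m
  have hmR : |y m| ^ (p - 2) * h ^ 2 ≤ R :=
    single_le_sum (f := fun j => |y j| ^ (p - 2) * h ^ 2) (fun j _ => by positivity) (mem_univ m)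
  have hR' : ∑ j ∈ univ.erase m, |y j| ^ (p - 2) * h ^ 2 ≤ R :=
    sum_le_sum_of_subset_of_nonneg (erase_subset m univ) fun j _ _ => by positivity
  have hremainder := (abs_taylor_remainder_at_max_le hp hp4 hm h).trans
    (show _ ≤ c * (n * (R + T) + n ^ (p - 1) * (|h| ^ p + T)) by gcongr)
  have hoffDiag := (sum_abs_offDiag_term_le hp.le hm h).trans
    (show _ ≤ (n + 2) * T + R by gcongr)
  have hslack : 0 ≤ c * n * |h| ^ p + c * n ^ (p - 1) * R + (n + 2) * |h| ^ p + (n + 1) * R := by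
    positivity
  calc _ ≤ _ := abs_sub _ _
    _ ≤ _ := add_le_add hremainder ((abs_sum_le_sum_abs _ _).trans hoffDiag)
    _ ≤ _ := by unfold expansionConst; nlinarith

theorem abs_potential_expansion_le (hp : 2 < p) (hp4 : p ≤ 4) (y : ι → ℝ) (h : ℝ) :
    |p⁻¹ * |∑ j, y j + h| ^ p - p⁻¹ * ∑ j, |y j| ^ p - ∑ j, |y j| ^ (p - 2) * y j * h
        - ∑ j, ∑ k, (if j ≠ k then |y j| ^ (p - 2) * y j * y k else 0)|
      ≤ expansionConst p (Fintype.card ι)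
        * ((∑ j, ∑ k, if j < k then pairInteraction p (y j) (y k) else 0) + |h| ^ p
          + ∑ j, |y j| ^ (p - 2) * h ^ 2) := by
  rcases isEmpty_or_nonempty ι with hι | hι
  · simp only [univ_eq_empty, sum_empty, zero_add, mul_zero, sub_zero, add_zero]
    have hC := two_le_expansionConst (p := p) (by linarith) (Nat.cast_nonneg (Fintype.card ι))
    have hpinv : p⁻¹ ≤ 2 := by rw [inv_le_comm₀ (by linarith) two_pos]; linarith
    rw [abs_of_nonneg (by positivity)]
    have : 0 ≤ |h| ^ p := by positivity
    nlinarith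
  obtain ⟨m, hm⟩ := Finite.exists_max fun j => |y j|
  exact abs_potential_expansion_le_of_max hp hp4 hm h

end

theorem multibump_potential_expansion_general
    (N : ℕ) (hN : 5 ≤ N) (J : ℕ) :
    ∃ C : ℝ, 0 < C ∧ ∀ (y : Fin J → ℝ) (h : ℝ),
      |((N : ℝ) - 2) / (2 * (N : ℝ)) * |(∑ j, y j) + h| ^ (2 * (N : ℝ) / ((N : ℝ) - 2))
          - ((N : ℝ) - 2) / (2 * (N : ℝ)) * ∑ j, |y j| ^ (2 * (N : ℝ) / ((N : ℝ) - 2))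
          - ∑ j, |y j| ^ ((4 : ℝ) / ((N : ℝ) - 2)) * y j * h
          - ∑ j, ∑ k, (if j ≠ k then |y j| ^ ((4 : ℝ) / ((N : ℝ) - 2)) * y j * y k else 0)|
        ≤ C * ((∑ j, ∑ k, if j < k then
                min (|y j| ^ ((4 : ℝ) / ((N : ℝ) - 2)) * (y k) ^ 2)
                    (|y k| ^ ((4 : ℝ) / ((N : ℝ) - 2)) * (y j) ^ 2)
                + min (|y j| ^ (((N : ℝ) + 2) / ((N : ℝ) - 2)) * |y k|)
                    (|y k| ^ (((N : ℝ) + 2) / ((N : ℝ) - 2)) * |y j|)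
              else 0)
            + |h| ^ (2 * (N : ℝ) / ((N : ℝ) - 2))
            + ∑ j, |y j| ^ ((4 : ℝ) / ((N : ℝ) - 2)) * h ^ 2) := by
  have hN' : (5 : ℝ) ≤ N := by exact_mod_cast hN
  have hN2 : (N : ℝ) - 2 ≠ 0 := by linarith
  set p := 2 * (N : ℝ) / ((N : ℝ) - 2) with hp
  have hp2 : 2 < p := by rw [hp, lt_div_iff₀ (by linarith)]; linarith
  have hp4 : p ≤ 4 := by rw [hp, div_le_iff₀ (by linarith)]; linarith
  have hcoeff : ((N : ℝ) - 2) / (2 * (N : ℝ)) = p⁻¹ := by rw [hp, inv_div]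
  have hexp₂ : (4 : ℝ) / ((N : ℝ) - 2) = p - 2 := by rw [hp]; field_simp; ring
  have hexp₁ : ((N : ℝ) + 2) / ((N : ℝ) - 2) = p - 1 := by rw [hp]; field_simp; ring
  have hC := two_le_expansionConst (p := p) (by linarith) (Nat.cast_nonneg J)
  refine ⟨expansionConst p J, by linarith, fun y h => ?_⟩
  rw [hcoeff, hexp₂, hexp₁]
  have key := abs_potential_expansion_le hp2 hp4 y h
  rw [Fintype.card_fin] at key
  exact key

/-- Pointwise multi-bump expansion inequality for the energy-critical potential
term. -/
theorem multibump_potential_expansion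
    (N : ℕ) (hN : 5 ≤ N) (J : ℕ) (hJ : 1 ≤ J) :
    ∃ C : ℝ, 0 < C ∧ ∀ (y : Fin J → ℝ) (h : ℝ),
      |((N : ℝ) - 2) / (2 * (N : ℝ)) * |(∑ j, y j) + h| ^ (2 * (N : ℝ) / ((N : ℝ) - 2))
          - ((N : ℝ) - 2) / (2 * (N : ℝ)) * ∑ j, |y j| ^ (2 * (N : ℝ) / ((N : ℝ) - 2))
          - ∑ j, |y j| ^ ((4 : ℝ) / ((N : ℝ) - 2)) * y j * h
          - ∑ j, ∑ k, (if j ≠ k then |y j| ^ ((4 : ℝ) / ((N : ℝ) - 2)) * y j * y k else 0)|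
        ≤ C * ((∑ j, ∑ k, if j < k then
                min (|y j| ^ ((4 : ℝ) / ((N : ℝ) - 2)) * (y k) ^ 2)
                    (|y k| ^ ((4 : ℝ) / ((N : ℝ) - 2)) * (y j) ^ 2)
                + min (|y j| ^ (((N : ℝ) + 2) / ((N : ℝ) - 2)) * |y k|)
                    (|y k| ^ (((N : ℝ) + 2) / ((N : ℝ) - 2)) * |y j|)
              else 0)
            + |h| ^ (2 * (N : ℝ) / ((N : ℝ) - 2))
            + ∑ j, |y j| ^ ((4 : ℝ) / ((N : ℝ) - 2)) * h ^ 2) :=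
  multibump_potential_expansion_general N hN J
end

section
/- Let N ≥ 3 be an integer and define F : ℝ → ℝ by F(x) = |x|^{4/(N−2)} x. Then there exists a constant C = C(N) such that for all real numbers x ≠ 0 and y: | F(x + y) − F(x) − ((N+2)/(N−2)) |x|^{4/(N−2)} y | ≤ C ( 1_{{|y| ≤ |x|}} |y|² |x|^{(6−N)/(N−2)} + 1_{{|y| > |x|}} |y|^{(N+2)/(N−2)} ). -/
/-!
Write `G z = |z| ^ p * z`, so that `G' z = (p + 1) |z| ^ p` away from `0`. When `2 |y| ≤ |x|`,
the ball of radius `|y|` around `x` stays in `|z| ∈ [|x| / 2, 2 |x|]`, where `t ↦ t ^ p` is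
Lipschitz with constant `≍ |x| ^ (p - 1)`; the mean value theorem applied to `G - G' x • id` on
that ball gives the quadratic bound `≲ |y| ^ 2 |x| ^ (p - 1)`. Otherwise `|y| ≳ |x|`, and each of
`G (x + y)`, `G x` and `G' x * y` is `≲ max |x| |y| ^ (p + 1)`, which is `≲ |y| ^ 2 |x| ^ (p - 1)`
when `|x| / 2 < |y| ≤ |x|` and `≲ |y| ^ (p + 1)` when `|x| < |y|`.
-/

open Set Metric

namespace Real

variable {p : ℝ}

theorem hasDerivAt_abs_rpow_mul_self {z : ℝ} (hz : z ≠ 0) :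
    HasDerivAt (fun w : ℝ => |w| ^ p * w) ((p + 1) * |z| ^ p) z := by
  have hz' : |z| ≠ 0 := abs_ne_zero.2 hz
  have h : HasDerivAt (fun w : ℝ => |w| ^ p * w)
      (SignType.sign z * p * |z| ^ (p - 1) * z + |z| ^ p * 1) z :=
    ((hasDerivAt_abs hz).rpow_const (Or.inl hz')).mul (hasDerivAt_id' z)
  convert h using 1
  rw [rpow_sub_one hz', mul_right_comm _ _ z, mul_right_comm _ _ z, sign_mul_self]
  field_simp

theorem abs_abs_rpow_mul_self (hp : p + 1 ≠ 0) (z : ℝ) : |(|z| ^ p * z)| = |z| ^ (p + 1) := by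
  rw [abs_mul, abs_of_nonneg (rpow_nonneg (abs_nonneg z) p), rpow_add_one' (abs_nonneg z) hp]

theorem abs_rpow_sub_rpow_le {m M a b : ℝ} (hp : 0 ≤ p) (hm : 0 < m)
    (ha : a ∈ Icc m M) (hb : b ∈ Icc m M) :
    |a ^ p - b ^ p| ≤ p * (m ^ (p - 1) + M ^ (p - 1)) * |a - b| := by
  have hderiv : ∀ s ∈ Icc m M, HasDerivWithinAt (fun t : ℝ => t ^ p)
      (p * s ^ (p - 1)) (Icc m M) s := fun s hs =>
    (hasDerivAt_rpow_const (Or.inl (hm.trans_le hs.1).ne')).hasDerivWithinAt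
  have hbound : ∀ s ∈ Icc m M, ‖p * s ^ (p - 1)‖ ≤ p * (m ^ (p - 1) + M ^ (p - 1)) := by
    intro s hs
    have hs0 : 0 < s := hm.trans_le hs.1
    rw [norm_eq_abs, abs_of_nonneg (by positivity)]
    gcongr
    rcases le_total (p - 1) 0 with h | h
    · linarith [rpow_le_rpow_of_nonpos hm hs.1 h, rpow_nonneg (hs0.le.trans hs.2) (p - 1)]
    · linarith [rpow_le_rpow hs0.le hs.2 h, rpow_nonneg hm.le (p - 1)]
  simpa [norm_eq_abs] using
    (convex_Icc m M).norm_image_sub_le_of_norm_hasDerivWithin_le hderiv hbound hb ha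

theorem abs_rpow_mul_self_remainder_le_max (hp : 0 ≤ p) (x y : ℝ) :
    |(|x + y| ^ p * (x + y)) - |x| ^ p * x - (p + 1) * |x| ^ p * y|
      ≤ (2 ^ (p + 1) + p + 2) * max |x| |y| ^ (p + 1) := by
  set M := max |x| |y|
  have hxM : |x| ≤ M := le_max_left _ _
  have hyM : |y| ≤ M := le_max_right _ _
  have hxyM : |x + y| ≤ 2 * M := by linarith [abs_add_le x y]
  have hp1 : p + 1 ≠ 0 := by linarith
  have h₁ : |(|x + y| ^ p * (x + y))| ≤ 2 ^ (p + 1) * M ^ (p + 1) := by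
    rw [abs_abs_rpow_mul_self hp1, ← mul_rpow zero_le_two (abs_nonneg x |>.trans hxM)]
    gcongr
  have h₂ : |(|x| ^ p * x)| ≤ M ^ (p + 1) := by
    rw [abs_abs_rpow_mul_self hp1]
    gcongr
  have h₃ : |(p + 1) * |x| ^ p * y| ≤ (p + 1) * M ^ (p + 1) := by
    rw [abs_mul, abs_mul, abs_of_nonneg (by linarith : 0 ≤ p + 1),
      abs_of_nonneg (rpow_nonneg (abs_nonneg x) p), rpow_add_one' (abs_nonneg x |>.trans hxM) hp1,
      mul_assoc]
    gcongr
  calc _ ≤ |(|x + y| ^ p * (x + y))| + |(|x| ^ p * x)| + |(p + 1) * |x| ^ p * y| :=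
        (abs_sub _ _).trans (add_le_add_left (abs_sub _ _) _)
    _ ≤ _ := by linarith

theorem abs_rpow_mul_self_remainder_le_of_two_mul_le (hp : 0 ≤ p) {x y : ℝ} (hx : x ≠ 0)
    (hy : 2 * |y| ≤ |x|) :
    |(|x + y| ^ p * (x + y)) - |x| ^ p * x - (p + 1) * |x| ^ p * y|
      ≤ p * (p + 1) * (2⁻¹ ^ (p - 1) + 2 ^ (p - 1)) * (|y| ^ 2 * |x| ^ (p - 1)) := by
  set K := p * (2⁻¹ ^ (p - 1) + 2 ^ (p - 1)) * |x| ^ (p - 1)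
  have hx₀ : 0 < |x| := abs_pos.2 hx
  have hball {z : ℝ} (hz : z ∈ closedBall x |y|) : |z| ∈ Icc (2⁻¹ * |x|) (2 * |x|) := by
    rw [mem_closedBall, dist_eq_norm, norm_eq_abs] at hz
    constructor <;>
      linarith [abs_sub_abs_le_abs_sub x z, abs_sub_abs_le_abs_sub z x, abs_sub_comm x z]
  have hpow {z : ℝ} (hz : z ∈ closedBall x |y|) : |(|z| ^ p - |x| ^ p)| ≤ K * |y| := by
    have hxI : |x| ∈ Icc (2⁻¹ * |x|) (2 * |x|) := ⟨by linarith, by linarith⟩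
    calc |(|z| ^ p - |x| ^ p)|
        ≤ p * ((2⁻¹ * |x|) ^ (p - 1) + (2 * |x|) ^ (p - 1)) * |(|z| - |x|)| :=
          abs_rpow_sub_rpow_le hp (by positivity) (hball hz) hxI
      _ ≤ p * ((2⁻¹ * |x|) ^ (p - 1) + (2 * |x|) ^ (p - 1)) * |y| := by
          refine mul_le_mul_of_nonneg_left ?_ (by positivity)
          exact (abs_abs_sub_abs_le_abs_sub z x).trans (by simpa [dist_eq_norm] using hz)
      _ = K * |y| := by
          rw [mul_rpow (by norm_num) hx₀.le, mul_rpow zero_le_two hx₀.le]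
          ring
  have hderiv : ∀ z ∈ closedBall x |y|, HasDerivWithinAt
      (fun w : ℝ => |w| ^ p * w - (p + 1) * |x| ^ p * w)
      ((p + 1) * |z| ^ p - (p + 1) * |x| ^ p) (closedBall x |y|) z := by
    intro z hz
    have hz₀ : z ≠ 0 := abs_pos.1 (lt_of_lt_of_le (by positivity) (hball hz).1)
    simpa using ((hasDerivAt_abs_rpow_mul_self hz₀).fun_sub
      ((hasDerivAt_id' z).const_mul ((p + 1) * |x| ^ p))).hasDerivWithinAt
  have hbound : ∀ z ∈ closedBall x |y|,
      ‖(p + 1) * |z| ^ p - (p + 1) * |x| ^ p‖ ≤ (p + 1) * (K * |y|) := by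
    intro z hz
    rw [← mul_sub, norm_mul, norm_eq_abs, norm_eq_abs, abs_of_nonneg (by linarith)]
    gcongr
    exact hpow hz
  have := (convex_closedBall x |y|).norm_image_sub_le_of_norm_hasDerivWithin_le hderiv hbound
    (mem_closedBall_self (abs_nonneg y)) (show x + y ∈ closedBall x |y| by simp [dist_eq_norm])
  simp only [norm_eq_abs, add_sub_cancel_left] at this
  calc _ = |(|x + y| ^ p * (x + y) - (p + 1) * |x| ^ p * (x + y) -
        (|x| ^ p * x - (p + 1) * |x| ^ p * x))| := by ring_nf
    _ ≤ _ := this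
    _ = _ := by ring

theorem abs_rpow_mul_self_remainder_le (hp : 0 ≤ p) :
    ∃ C : ℝ, 0 < C ∧ ∀ x y : ℝ, x ≠ 0 →
      |(|x + y| ^ p * (x + y)) - |x| ^ p * x - (p + 1) * |x| ^ p * y|
        ≤ C * ((if |y| ≤ |x| then |y| ^ 2 * |x| ^ (p - 1) else 0)
            + (if |x| < |y| then |y| ^ (p + 1) else 0)) := by
  set A := p * (p + 1) * (2⁻¹ ^ (p - 1) + 2 ^ (p - 1))
  set B := (2 : ℝ) ^ (p + 1) + p + 2
  have hA : 0 ≤ A := by positivity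
  have hB : 0 < B := by positivity
  refine ⟨A + 4 * B, by positivity, fun x y hx => ?_⟩
  rcases le_or_gt |y| |x| with hyx | hxy
  · rw [if_pos hyx, if_neg hyx.not_gt, add_zero]
    have hR : 0 ≤ |y| ^ 2 * |x| ^ (p - 1) := by positivity
    rcases le_or_gt (2 * |y|) |x| with hnear | hmid
    · calc _ ≤ A * (|y| ^ 2 * |x| ^ (p - 1)) :=
            abs_rpow_mul_self_remainder_le_of_two_mul_le hp hx hnear
        _ ≤ (A + 4 * B) * (|y| ^ 2 * |x| ^ (p - 1)) := by gcongr; linarith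
    · have hx_pow : |x| ^ (p + 1) ≤ 4 * (|y| ^ 2 * |x| ^ (p - 1)) := by
        rw [show p + 1 = (p - 1) + (2 : ℕ) by push_cast; ring,
          rpow_add_natCast (abs_ne_zero.2 hx), mul_comm (|y| ^ 2)]
        have : |x| ^ 2 ≤ 4 * |y| ^ 2 := by nlinarith [abs_nonneg x]
        nlinarith [rpow_nonneg (abs_nonneg x) (p - 1)]
      calc _ ≤ B * max |x| |y| ^ (p + 1) := abs_rpow_mul_self_remainder_le_max hp x y
        _ = B * |x| ^ (p + 1) := by rw [max_eq_left hyx]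
        _ ≤ B * (4 * (|y| ^ 2 * |x| ^ (p - 1))) := by gcongr
        _ ≤ (A + 4 * B) * (|y| ^ 2 * |x| ^ (p - 1)) := by nlinarith
  · rw [if_neg hxy.not_ge, if_pos hxy, zero_add]
    calc _ ≤ B * max |x| |y| ^ (p + 1) := abs_rpow_mul_self_remainder_le_max hp x y
      _ = B * |y| ^ (p + 1) := by rw [max_eq_right hxy.le]
      _ ≤ (A + 4 * B) * |y| ^ (p + 1) := by gcongr; linarith

end Real

/-- Quadratic expansion estimate for the energy-critical nonlinearity
`F(x) = |x|^{4/(N-2)} x`. -/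
theorem critical_nonlinearity_expansion
    (N : ℕ) (hN : 3 ≤ N)
    (F : ℝ → ℝ) (hF : ∀ x : ℝ, F x = |x| ^ ((4 : ℝ) / ((N : ℝ) - 2)) * x) :
    ∃ C : ℝ, 0 < C ∧ ∀ x y : ℝ, x ≠ 0 →
      |F (x + y) - F x - ((N : ℝ) + 2) / ((N : ℝ) - 2) * |x| ^ ((4 : ℝ) / ((N : ℝ) - 2)) * y|
        ≤ C * ((if |y| ≤ |x| then |y| ^ 2 * |x| ^ ((6 - (N : ℝ)) / ((N : ℝ) - 2)) else 0)
            + (if |x| < |y| then |y| ^ (((N : ℝ) + 2) / ((N : ℝ) - 2)) else 0)) := by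
  have hN₂ : (0 : ℝ) < N - 2 := by
    have : (3 : ℝ) ≤ N := by exact_mod_cast hN
    linarith
  have hp : (0 : ℝ) ≤ 4 / (N - 2) := by positivity
  have hp_add_one : ((N : ℝ) + 2) / (N - 2) = 4 / (N - 2) + 1 := by field_simp; ring
  have hp_sub_one : (6 - (N : ℝ)) / (N - 2) = 4 / (N - 2) - 1 := by field_simp; ring
  simpa only [hF, hp_add_one, hp_sub_one] using Real.abs_rpow_mul_self_remainder_le hp
end

section
/- Let ν be an odd positive integer. Set k₁ = ⌊(ν+2)/4⌋ and k₂ = ⌊(ν+4)/4⌋, and define for 1 ≤ j ≤ k₁ the coefficients c̃_j = ( ∏_{ℓ=1}^{k₁} (ν − 2ℓ − 2j + 2) ) / ( ∏_{1 ≤ ℓ ≤ k₁, ℓ ≠ j} (2ℓ − 2j) ), and for 1 ≤ j ≤ k₂ the coefficients d̃_j = ( ∏_{ℓ=1}^{k₂} (ν − 2ℓ − 2j + 4) ) / ( ∏_{1 ≤ ℓ ≤ k₂, ℓ ≠ j} (2ℓ − 2j) ). Then: (i) for every integer m with 1 ≤ m ≤ k₁, Σ_{j=1}^{k₁} c̃_j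 / (ν − 2m − 2j + 2) = 1; (ii) Σ_{j=1}^{k₁} c̃_j/(2j) + 1 = ∏_{ℓ=1}^{k₁} (ν − 2ℓ + 2)/(2ℓ); (iii) for every integer m with 1 ≤ m ≤ k₂, Σ_{j=1}^{k₂} d̃_j / (ν − 2m − 2j + 4) = 1; (iv) Σ_{j=1}^{k₂} d̃_j/(2j) + 1 = ∏_{ℓ=1}^{k₂} (ν − 2ℓ + 4)/(2ℓ). -/
open Polynomial Finset

private lemma coeff_lagrange_basis {s : Finset ℕ} {v : ℕ → ℝ} (hv : Set.InjOn v s) {i : ℕ}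
    (hi : i ∈ s) :
    (Lagrange.basis s v i).coeff (s.card - 1) = (∏ j ∈ s.erase i, (v i - v j))⁻¹ := by
  have h1 : Lagrange.basis s v i
      = C (∏ j ∈ s.erase i, (v i - v j)⁻¹) * ∏ j ∈ s.erase i, (X - C (v j)) := by
    rw [Lagrange.basis, map_prod, ← prod_mul_distrib]
    rfl
  have hm : (∏ j ∈ s.erase i, (X - C (v j))).Monic :=
    monic_prod_of_monic _ _ fun j _ => monic_X_sub_C _
  have hd : (∏ j ∈ s.erase i, (X - C (v j))).natDegree = s.card - 1 := by
    rw [natDegree_prod_of_monic _ _ fun j _ => monic_X_sub_C _]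
    simp [card_erase_of_mem hi]
  rw [h1, coeff_C_mul, ← hd, hm.coeff_natDegree, mul_one, prod_inv_distrib]

private lemma divided_difference (s : Finset ℕ) {v : ℕ → ℝ} (hv : Set.InjOn v s)
    (f : Polynomial ℝ) (hf : f.degree < s.card) :
    ∑ i ∈ s, f.eval (v i) * (∏ j ∈ s.erase i, (v i - v j))⁻¹ = f.coeff (s.card - 1) := by
  conv_rhs => rw [Lagrange.eq_interpolate hv hf]
  rw [Lagrange.interpolate_apply, Polynomial.finset_sum_coeff]
  exact (sum_congr rfl fun i hi => by rw [coeff_C_mul, coeff_lagrange_basis hv hi]).symm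

private lemma lemA (k : ℕ) (μ : ℝ) (hne : ∀ i : ℕ, μ - 2 * (i : ℝ) ≠ 0) {m : ℕ}
    (hm : m ∈ Finset.Icc 1 k) :
    ∑ j ∈ Finset.Icc 1 k,
      ((∏ ℓ ∈ Finset.Icc 1 k, (μ - 2 * (ℓ : ℝ) - 2 * (j : ℝ))) /
        (∏ ℓ ∈ (Finset.Icc 1 k).erase j, (2 * (ℓ : ℝ) - 2 * (j : ℝ)))) /
          (μ - 2 * (m : ℝ) - 2 * (j : ℝ)) = 1 := by
  set s := Finset.Icc 1 k with hs
  set v : ℕ → ℝ := fun j => -2 * (j : ℝ) with hvdef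
  have hv : Set.InjOn v s := by
    intro a _ b _ h
    have : (a : ℝ) = b := by simp only [hvdef] at h; linarith
    exact_mod_cast this
  set f : Polynomial ℝ := ∏ ℓ ∈ s.erase m, (X + C (μ - 2 * (ℓ : ℝ))) with hfdef
  have hmonic : f.Monic := monic_prod_of_monic _ _ fun ℓ _ => monic_X_add_C _
  have hcard : s.card = k := by simp [hs]
  have hdeg : f.natDegree = k - 1 := by
    rw [hfdef, natDegree_prod_of_monic _ _ fun ℓ _ => monic_X_add_C _]
    simp only [natDegree_X_add_C, Finset.sum_const, smul_eq_mul, mul_one]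
    rw [card_erase_of_mem hm, hcard]
  have hkpos : 1 ≤ k := by have := Finset.mem_Icc.1 hm; omega
  have hflt : f.degree < s.card := by
    rw [degree_eq_natDegree hmonic.ne_zero, hdeg, hcard]
    exact_mod_cast Nat.sub_lt hkpos one_pos
  have key := divided_difference s hv f hflt
  have hc1 : f.coeff (s.card - 1) = 1 := by rw [hcard, ← hdeg]; exact hmonic.coeff_natDegree
  rw [hc1] at key
  rw [← key]
  refine sum_congr rfl fun j hj => ?_
  have hb : μ - 2 * (m : ℝ) - 2 * (j : ℝ) ≠ 0 := by
    intro h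
    exact hne (m + j) (by push_cast; linarith)
  have hnum : ∏ ℓ ∈ s, (μ - 2 * (ℓ : ℝ) - 2 * (j : ℝ))
      = (μ - 2 * (m : ℝ) - 2 * (j : ℝ)) * ∏ ℓ ∈ s.erase m, (μ - 2 * (ℓ : ℝ) - 2 * (j : ℝ)) :=
    (Finset.mul_prod_erase s _ hm).symm
  have heval : f.eval (v j) = ∏ ℓ ∈ s.erase m, (μ - 2 * (ℓ : ℝ) - 2 * (j : ℝ)) := by
    simp only [hfdef, eval_prod, eval_add, eval_X, eval_C, hvdef]
    exact prod_congr rfl fun ℓ _ => by ring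
  have hden : (∏ ℓ ∈ s.erase j, (2 * (ℓ : ℝ) - 2 * (j : ℝ))) = ∏ ℓ ∈ s.erase j, (v j - v ℓ) :=
    prod_congr rfl fun ℓ _ => by simp only [hvdef]; ring
  rw [hnum, hden, heval, mul_div_assoc, mul_div_cancel_left₀ _ hb, div_eq_mul_inv]

private lemma lemB (k : ℕ) (μ : ℝ) :
    ∑ j ∈ Finset.Icc 1 k,
      ((∏ ℓ ∈ Finset.Icc 1 k, (μ - 2 * (ℓ : ℝ) - 2 * (j : ℝ))) /
        (∏ ℓ ∈ (Finset.Icc 1 k).erase j, (2 * (ℓ : ℝ) - 2 * (j : ℝ)))) / (2 * (j : ℝ)) + 1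
      = ∏ ℓ ∈ Finset.Icc 1 k, (μ - 2 * (ℓ : ℝ)) / (2 * (ℓ : ℝ)) := by
  set s := Finset.Icc 1 k with hs
  have h0 : (0 : ℕ) ∉ s := by simp [hs]
  set t := insert 0 s with htdef
  set v : ℕ → ℝ := fun j => -2 * (j : ℝ) with hvdef
  have hv : Set.InjOn v t := by
    intro a _ b _ h
    have : (a : ℝ) = b := by simp only [hvdef] at h; linarith
    exact_mod_cast this
  set f : Polynomial ℝ := ∏ ℓ ∈ s, (X + C (μ - 2 * (ℓ : ℝ))) with hfdef
  have hmonic : f.Monic := monic_prod_of_monic _ _ fun ℓ _ => monic_X_add_C _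
  have hcards : s.card = k := by simp [hs]
  have hcardt : t.card = k + 1 := by rw [htdef, card_insert_of_notMem h0, hcards]
  have hdeg : f.natDegree = k := by
    rw [hfdef, natDegree_prod_of_monic _ _ fun ℓ _ => monic_X_add_C _]
    simp only [natDegree_X_add_C, Finset.sum_const, smul_eq_mul, mul_one]
    exact hcards
  have hflt : f.degree < t.card := by
    rw [degree_eq_natDegree hmonic.ne_zero, hdeg, hcardt]
    exact_mod_cast Nat.lt_succ_self k
  have key := divided_difference t hv f hflt
  have hc1 : f.coeff (t.card - 1) = 1 := by
    rw [hcardt, Nat.add_sub_cancel, ← hdeg]; exact hmonic.coeff_natDegree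
  rw [hc1, htdef, Finset.sum_insert h0] at key
  have e0 : f.eval (v 0) * (∏ j ∈ (insert 0 s).erase 0, (v 0 - v j))⁻¹
      = ∏ ℓ ∈ s, (μ - 2 * (ℓ : ℝ)) / (2 * (ℓ : ℝ)) := by
    rw [Finset.erase_insert h0]
    have hv0 : v 0 = 0 := by simp [hvdef]
    have h1 : f.eval (v 0) = ∏ ℓ ∈ s, (μ - 2 * (ℓ : ℝ)) := by
      simp only [hfdef, eval_prod, eval_add, eval_X, eval_C, hv0]
      exact prod_congr rfl fun ℓ _ => by ring
    have h2 : (∏ j ∈ s, (v 0 - v j)) = ∏ j ∈ s, (2 * (j : ℝ)) :=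
      prod_congr rfl fun ℓ _ => by simp only [hvdef, hv0]; ring
    rw [h1, h2, ← div_eq_mul_inv, ← prod_div_distrib]
  have hsum : ∑ j ∈ s, f.eval (v j) * (∏ ℓ ∈ (insert 0 s).erase j, (v j - v ℓ))⁻¹
      = -∑ j ∈ s, ((∏ ℓ ∈ s, (μ - 2 * (ℓ : ℝ) - 2 * (j : ℝ))) /
          (∏ ℓ ∈ s.erase j, (2 * (ℓ : ℝ) - 2 * (j : ℝ)))) / (2 * (j : ℝ)) := by
    rw [← Finset.sum_neg_distrib]
    refine sum_congr rfl fun j hj => ?_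
    have hj0 : (0 : ℕ) ≠ j := by have := Finset.mem_Icc.1 hj; omega
    have hjer : (0 : ℕ) ∉ s.erase j := fun h => h0 (Finset.mem_of_mem_erase h)
    have h3 : (insert 0 s).erase j = insert 0 (s.erase j) := Finset.erase_insert_of_ne hj0
    have h4 : (∏ ℓ ∈ insert 0 (s.erase j), (v j - v ℓ))
        = (-(2 * (j : ℝ))) * ∏ ℓ ∈ s.erase j, (2 * (ℓ : ℝ) - 2 * (j : ℝ)) := by
      rw [Finset.prod_insert hjer]
      congr 1
      · simp only [hvdef]; push_cast; ring
      · exact prod_congr rfl fun ℓ _ => by simp only [hvdef]; ring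
    have heval : f.eval (v j) = ∏ ℓ ∈ s, (μ - 2 * (ℓ : ℝ) - 2 * (j : ℝ)) := by
      simp only [hfdef, eval_prod, eval_add, eval_X, eval_C, hvdef]
      exact prod_congr rfl fun ℓ _ => by ring
    rw [h3, h4, heval, mul_inv, inv_neg, div_eq_mul_inv, div_eq_mul_inv]
    ring
  rw [e0, hsum] at key
  linarith

/-- Identities for the projection coefficients `c̃_j` and `d̃_j`. -/
theorem projection_coefficient_identities
    (ν : ℕ) (hνodd : Odd ν) (hνpos : 0 < ν)
    (k₁ k₂ : ℕ) (hk₁ : k₁ = (ν + 2) / 4) (hk₂ : k₂ = (ν + 4) / 4)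
    (ctil dtil : ℕ → ℝ)
    (hctil : ∀ j : ℕ, ctil j =
      (∏ ℓ ∈ Finset.Icc 1 k₁, ((ν : ℝ) - 2 * (ℓ : ℝ) - 2 * (j : ℝ) + 2)) /
        (∏ ℓ ∈ (Finset.Icc 1 k₁).erase j, (2 * (ℓ : ℝ) - 2 * (j : ℝ))))
    (hdtil : ∀ j : ℕ, dtil j =
      (∏ ℓ ∈ Finset.Icc 1 k₂, ((ν : ℝ) - 2 * (ℓ : ℝ) - 2 * (j : ℝ) + 4)) /
        (∏ ℓ ∈ (Finset.Icc 1 k₂).erase j, (2 * (ℓ : ℝ) - 2 * (j : ℝ)))) :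
    (∀ m ∈ Finset.Icc 1 k₁,
      ∑ j ∈ Finset.Icc 1 k₁, ctil j / ((ν : ℝ) - 2 * (m : ℝ) - 2 * (j : ℝ) + 2) = 1) ∧
    (∑ j ∈ Finset.Icc 1 k₁, ctil j / (2 * (j : ℝ)) + 1
      = ∏ ℓ ∈ Finset.Icc 1 k₁, ((ν : ℝ) - 2 * (ℓ : ℝ) + 2) / (2 * (ℓ : ℝ))) ∧
    (∀ m ∈ Finset.Icc 1 k₂,
      ∑ j ∈ Finset.Icc 1 k₂, dtil j / ((ν : ℝ) - 2 * (m : ℝ) - 2 * (j : ℝ) + 4) = 1) ∧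
    (∑ j ∈ Finset.Icc 1 k₂, dtil j / (2 * (j : ℝ)) + 1
      = ∏ ℓ ∈ Finset.Icc 1 k₂, ((ν : ℝ) - 2 * (ℓ : ℝ) + 4) / (2 * (ℓ : ℝ))) := by
  have e1 : ∀ x y : ℝ, (ν : ℝ) - x - y + 2 = ((ν : ℝ) + 2) - x - y := fun x y => by ring
  have e2 : ∀ x : ℝ, (ν : ℝ) - x + 2 = ((ν : ℝ) + 2) - x := fun x => by ring
  have e3 : ∀ x y : ℝ, (ν : ℝ) - x - y + 4 = ((ν : ℝ) + 4) - x - y := fun x y => by ring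
  have e4 : ∀ x : ℝ, (ν : ℝ) - x + 4 = ((ν : ℝ) + 4) - x := fun x => by ring
  have hμ2 : ∀ i : ℕ, ((ν : ℝ) + 2) - 2 * (i : ℝ) ≠ 0 := by
    intro i h
    have h' : ν + 2 = 2 * i := by
      have : ((ν + 2 : ℕ) : ℝ) = ((2 * i : ℕ) : ℝ) := by push_cast; linarith
      exact_mod_cast this
    obtain ⟨c, hc⟩ := hνodd
    omega
  have hμ4 : ∀ i : ℕ, ((ν : ℝ) + 4) - 2 * (i : ℝ) ≠ 0 := by
    intro i h
    have h' : ν + 4 = 2 * i := by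
      have : ((ν + 4 : ℕ) : ℝ) = ((2 * i : ℕ) : ℝ) := by push_cast; linarith
      exact_mod_cast this
    obtain ⟨c, hc⟩ := hνodd
    omega
  refine ⟨?_, ?_, ?_, ?_⟩
  · intro m hm
    simp only [hctil, e1]
    exact lemA k₁ _ hμ2 hm
  · simp only [hctil, e1, e2]
    exact lemB k₁ _
  · intro m hm
    simp only [hdtil, e3]
    exact lemA k₂ _ hμ4 hm
  · simp only [hdtil, e3, e4]
    exact lemB k₂ _
end

section
/- Let N ≥ 3 be an integer, a > 0, β = √(1 + 4a/(N−2)²), c = (N−2)(1−β)/2, α = −(N−2)(1+β)/2; assume ν := (N−2)β is an odd positive integer. Let R > 0, k₁ = ⌊(ν+2)/4⌋, and let c̃_j = ( ∏_{ℓ=1}^{k₁} (ν − 2ℓ − 2j + 2) ) / ( ∏_{1 ≤ ℓ ≤ k₁, ℓ ≠ j} (2ℓ − 2j) ) for 1 ≤ j ≤ k₁. Then for every g ∈ L²((R,∞), r^{N−1}dr) the integrals ∫_R^∞ g(r) r^{c+2i−1} dr (1 ≤ i ≤ k₁) converge absolutely, and the squared distance of g to the span of { r^{α+2j−2} : 1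 ≤ j ≤ k₁ } in L²((R,∞), r^{N−1}dr) is given by: inf_{q ∈ ℝ^{k₁}} ∫_R^∞ | g(r) − Σ_{j=1}^{k₁} q_j r^{α+2j−2} |² r^{N−1}dr = ∫_R^∞ g(r)² r^{N−1}dr − Σ_{i,j=1}^{k₁} c̃_i c̃_j ( R^{ν−2i−2j+2} / (ν−2i−2j+2) ) ( ∫_R^∞ g(r) r^{c+2i−1} dr ) ( ∫_R^∞ g(r) r^{c+2j−1} dr ). -/
/-!
Since `2α + N - 2 = -ν`, the weighted inner products of the powers `r^{α+2j-2}` on `(R, ∞)` are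
`G i j = R^{-(x_i+x_j)} / (x_i+x_j)` with nodes `x_j = ν/2 + 1 - 2j`; oddness of `ν` and
`j ≤ ⌊(ν+2)/4⌋` make every `x_i + x_j` positive, which is what makes all the integrals converge.
Up to the diagonal scaling by `R^{∓x_j}`, `G` is the Cauchy matrix `1/(x_i+x_j)`, whose inverse is
`c̃_j c̃_m / (x_j+x_m)` with `c̃_j = ∏_ℓ (x_j+x_ℓ) / ∏_{ℓ≠j} (x_j-x_ℓ)`. This comes from Lagrange's
identity `∑_j P(x_j) / ∏_{ℓ≠j} (x_j-x_ℓ) = coeff P (#nodes - 1)`, applied to `∏_{ℓ≠i,m} (X+x_ℓ)`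
and, on the diagonal, to `∏_{ℓ≠i} (X+x_ℓ)` with the extra node `-x_i`.
The objective is the quadratic `‖g‖² - 2 qᵀb + qᵀGq` with `b_i = ∫ g r^{c+2i-1}` and `G` positive
semidefinite, so its infimum is attained at `q = G⁻¹b` and equals `‖g‖² - bᵀG⁻¹b`.
-/

open Finset Polynomial

section CauchyMatrix

variable {K : Type*} [Field K]

lemma eval_nodal_neg (t : Finset K) (y : K) :
    (Lagrange.nodal t Neg.neg).eval y = ∏ w ∈ t, (y + w) := by
  simp [Lagrange.eval_nodal]

variable [DecidableEq K]

def cauchyWeight (s : Finset K) (x : K) : K :=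
  (∏ y ∈ s, (x + y)) / ∏ y ∈ s.erase x, (x - y)

variable {s : Finset K}

theorem sum_cauchyWeight_div_of_ne (hs : ∀ x ∈ s, ∀ y ∈ s, x + y ≠ 0) {x z : K}
    (hx : x ∈ s) (hz : z ∈ s) (hxz : x ≠ z) :
    ∑ y ∈ s, cauchyWeight s y / ((x + y) * (y + z)) = 0 := by
  have hz' : z ∈ s.erase x := mem_erase.2 ⟨hxz.symm, hz⟩
  set t := (s.erase x).erase z
  have hcard : #s = #t + 2 := by
    rw [card_erase_of_mem hz', card_erase_of_mem hx]
    have := card_le_card (insert_subset hx (singleton_subset_iff.2 hz))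
    rw [card_pair hxz] at this
    omega
  have hP : (Lagrange.nodal t Neg.neg).natDegree = #t := Lagrange.natDegree_nodal
  have hcoeff := Lagrange.coeff_eq_sum (s := s) (v := id) (Set.injOn_id _)
    (P := Lagrange.nodal t Neg.neg)
    (by rw [degree_eq_natDegree Lagrange.nodal_ne_zero, hP]; exact_mod_cast (by omega))
  rw [coeff_eq_zero_of_natDegree_lt (by omega)] at hcoeff
  rw [hcoeff]
  refine sum_congr rfl fun y hy => ?_
  have hxy := hs x hx y hy
  have hyz := hs y hy z hz
  rw [cauchyWeight, ← mul_prod_erase s _ hx, ← mul_prod_erase _ _ hz', eval_nodal_neg]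
  simp only [id]
  rw [add_comm y x]
  field_simp
  rfl

theorem sum_cauchyWeight_div_self_mul (hs : ∀ x ∈ s, ∀ y ∈ s, x + y ≠ 0) {x : K} (hx : x ∈ s) :
    (∑ y ∈ s, cauchyWeight s y / ((x + y) * (y + x))) * cauchyWeight s x = 1 := by
  have hnx : -x ∉ s := fun h => hs x hx (-x) h (add_neg_cancel x)
  set t := s.erase x
  have hcard : #s = #t + 1 := (card_erase_add_one hx).symm
  have hP : (Lagrange.nodal t Neg.neg).natDegree = #t := Lagrange.natDegree_nodal
  have hcoeff := Lagrange.coeff_eq_sum (s := insert (-x) s) (v := id) (Set.injOn_id _)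
    (P := Lagrange.nodal t Neg.neg)
    (by rw [degree_eq_natDegree Lagrange.nodal_ne_zero, hP, card_insert_of_notMem hnx];
        exact_mod_cast (by omega))
  rw [coeff_eq_zero_of_natDegree_lt (by rw [card_insert_of_notMem hnx]; omega),
    sum_insert hnx, erase_insert hnx] at hcoeff
  have hterm : ∀ y ∈ s, (Lagrange.nodal t Neg.neg).eval (id y) /
      ∏ w ∈ (insert (-x) s).erase y, (id y - id w) = cauchyWeight s y / ((x + y) * (y + x)) := by
    intro y hy
    have hyx : -x ≠ y := fun h => hnx (h ▸ hy)
    have hxy := hs x hx y hy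
    rw [erase_insert_of_ne hyx, prod_insert (fun h => hnx (mem_of_mem_erase h)), cauchyWeight,
      ← mul_prod_erase s _ hx, eval_nodal_neg]
    simp only [id, sub_neg_eq_add]
    rw [add_comm y x]
    field_simp
    rfl
  rw [sum_congr rfl hterm] at hcoeff
  rw [show ∑ y ∈ s, cauchyWeight s y / ((x + y) * (y + x)) = _ from
    eq_neg_of_add_eq_zero_right hcoeff.symm, eval_nodal_neg, cauchyWeight]
  simp only [id]
  have h1 : ∏ w ∈ t, (-x + w) = (-1) ^ #t * ∏ w ∈ t, (x - w) := by
    rw [← prod_neg]; exact prod_congr rfl fun w _ => by ring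
  have h2 : ∏ w ∈ s, (-x - w) = (-1) ^ #s * ∏ w ∈ s, (x + w) := by
    rw [← prod_neg]; exact prod_congr rfl fun w _ => by ring
  have hne1 : ∏ w ∈ t, (x - w) ≠ 0 :=
    prod_ne_zero_iff.2 fun w hw => sub_ne_zero.2 (ne_of_mem_erase hw).symm
  have hne2 : ∏ w ∈ s, (x + w) ≠ 0 := prod_ne_zero_iff.2 fun w hw => hs x hx w hw
  rw [h1, h2, hcard, pow_succ]
  field_simp
  exact div_self hne1

theorem sum_cauchyWeight_div_mul (hs : ∀ x ∈ s, ∀ y ∈ s, x + y ≠ 0) {x z : K}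
    (hx : x ∈ s) (hz : z ∈ s) :
    (∑ y ∈ s, cauchyWeight s y / ((x + y) * (y + z))) * cauchyWeight s z =
      if x = z then 1 else 0 := by
  split_ifs with hxz
  · subst hxz
    exact sum_cauchyWeight_div_self_mul hs hx
  · rw [sum_cauchyWeight_div_of_ne hs hx hz hxz, zero_mul]

end CauchyMatrix

theorem sum_rpow_div_mul_cauchyWeight {R : ℝ} (hR : 0 < R) {s : Finset ℝ}
    (hs : ∀ x ∈ s, ∀ y ∈ s, x + y ≠ 0) {x z : ℝ} (hx : x ∈ s) (hz : z ∈ s) :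
    ∑ y ∈ s, R ^ (-(x + y)) / (x + y) *
        (cauchyWeight s y * cauchyWeight s z * (R ^ (y + z) / (y + z))) =
      if x = z then 1 else 0 := by
  have hterm : ∀ y ∈ s, R ^ (-(x + y)) / (x + y) *
      (cauchyWeight s y * cauchyWeight s z * (R ^ (y + z) / (y + z))) =
        R ^ (z - x) * (cauchyWeight s y / ((x + y) * (y + z)) * cauchyWeight s z) := by
    intro y _
    rw [show z - x = -(x + y) + (y + z) by ring, Real.rpow_add hR (-(x + y)), div_mul_eq_div_div]
    ring
  rw [sum_congr rfl hterm, ← mul_sum, ← sum_mul, sum_cauchyWeight_div_mul hs hx hz]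
  split_ifs with hxz
  · simp [hxz]
  · rw [mul_zero]

section LeastSquares

variable {ι : Type*} (s : Finset ι) (G : ι → ι → ℝ)

theorem sum_sum_sub_mul_sub_mul (hG : ∀ i ∈ s, ∀ j ∈ s, G i j = G j i) {b q₀ : ι → ℝ}
    (hq₀ : ∀ i ∈ s, ∑ j ∈ s, G i j * q₀ j = b i) (q : ι → ℝ) :
    ∑ i ∈ s, ∑ j ∈ s, (q i - q₀ i) * (q j - q₀ j) * G i j =
      ∑ i ∈ s, ∑ j ∈ s, q i * q j * G i j - 2 * ∑ i ∈ s, q i * b i +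
        ∑ i ∈ s, q₀ i * b i := by
  have hleft : ∀ p : ι → ℝ, ∑ i ∈ s, ∑ j ∈ s, p i * q₀ j * G i j = ∑ i ∈ s, p i * b i := by
    intro p
    refine sum_congr rfl fun i hi => ?_
    rw [← hq₀ i hi, mul_sum]
    exact sum_congr rfl fun j _ => by ring
  have hright : ∀ p : ι → ℝ, ∑ i ∈ s, ∑ j ∈ s, q₀ i * p j * G i j = ∑ i ∈ s, p i * b i := by
    intro p
    rw [sum_comm, ← hleft p]
    refine sum_congr rfl fun i hi => sum_congr rfl fun j hj => ?_
    rw [hG j hj i hi]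
    ring
  simp only [sub_mul, mul_sub, sum_sub_distrib]
  rw [hleft, hright, hleft]
  ring

theorem ciInf_quadratic_eq [DecidableEq ι] (hG : ∀ i ∈ s, ∀ j ∈ s, G i j = G j i)
    (hpos : ∀ p : ι → ℝ, 0 ≤ ∑ i ∈ s, ∑ j ∈ s, p i * p j * G i j) {M : ι → ι → ℝ}
    (hGM : ∀ i ∈ s, ∀ k ∈ s, ∑ j ∈ s, G i j * M j k = if i = k then 1 else 0)
    (A : ℝ) (b : ι → ℝ) :
    ⨅ q : ι → ℝ, (A - 2 * ∑ i ∈ s, q i * b i + ∑ i ∈ s, ∑ j ∈ s, q i * q j * G i j) =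
      A - ∑ i ∈ s, ∑ j ∈ s, M i j * b i * b j := by
  set q₀ : ι → ℝ := fun j => ∑ k ∈ s, M j k * b k
  have hq₀ : ∀ i ∈ s, ∑ j ∈ s, G i j * q₀ j = b i := by
    intro i hi
    simp only [q₀, mul_sum, ← mul_assoc]
    rw [sum_comm, sum_congr rfl fun k hk => by rw [← sum_mul, hGM i hi k hk]]
    simp [hi]
  have hvalue : A - ∑ i ∈ s, ∑ j ∈ s, M i j * b i * b j = A - ∑ i ∈ s, q₀ i * b i := by
    simp only [q₀, sum_mul]
    congr 1
    exact sum_congr rfl fun i _ => sum_congr rfl fun j _ => by ring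
  have hge : ∀ q : ι → ℝ, A - ∑ i ∈ s, q₀ i * b i ≤
      A - 2 * ∑ i ∈ s, q i * b i + ∑ i ∈ s, ∑ j ∈ s, q i * q j * G i j := by
    intro q
    linarith [hpos fun i => q i - q₀ i, sum_sum_sub_mul_sub_mul s G hG hq₀ q]
  rw [hvalue]
  refine le_antisymm ?_ (le_ciInf hge)
  refine (ciInf_le ⟨_, Set.forall_mem_range.2 hge⟩ q₀).trans_eq ?_
  have h := sum_sum_sub_mul_sub_mul s G hG hq₀ q₀
  simp only [sub_self, zero_mul, sum_const_zero] at h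
  linarith

end LeastSquares

open MeasureTheory Set

section GramExpansion

variable {ι α : Type*}

lemma sum_mul_sq_mul (s : Finset ι) (q f : ι → ℝ) (w : ℝ) :
    (∑ j ∈ s, q j * f j) ^ 2 * w = ∑ i ∈ s, ∑ j ∈ s, q i * q j * (f i * f j * w) := by
  rw [sq, sum_mul_sum, sum_mul]
  refine sum_congr rfl fun i _ => ?_
  rw [sum_mul]
  exact sum_congr rfl fun j _ => by ring

variable [MeasurableSpace α] {μ : Measure α} {s : Finset ι} {w : α → ℝ} {e : ι → α → ℝ}

theorem integrable_sum_mul_sq (hee : ∀ i ∈ s, ∀ j ∈ s, Integrable (fun x => e i x * e j x * w x) μ)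
    (q : ι → ℝ) : Integrable (fun x => (∑ j ∈ s, q j * e j x) ^ 2 * w x) μ := by
  simp only [sum_mul_sq_mul]
  exact integrable_finsetSum _ fun i hi => integrable_finsetSum _ fun j hj =>
    (hee i hi j hj).const_mul _

theorem integral_sum_mul_sq (hee : ∀ i ∈ s, ∀ j ∈ s, Integrable (fun x => e i x * e j x * w x) μ)
    (q : ι → ℝ) :
    ∫ x, (∑ j ∈ s, q j * e j x) ^ 2 * w x ∂μ =
      ∑ i ∈ s, ∑ j ∈ s, q i * q j * ∫ x, e i x * e j x * w x ∂μ := by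
  simp only [sum_mul_sq_mul]
  rw [integral_finsetSum _ fun i hi => integrable_finsetSum _ fun j hj =>
    (hee i hi j hj).const_mul _]
  refine sum_congr rfl fun i hi => ?_
  rw [integral_finsetSum _ fun j hj => (hee i hi j hj).const_mul _]
  exact sum_congr rfl fun j _ => integral_const_mul _ _

theorem sum_sum_mul_integral_nonneg (hw : 0 ≤ᵐ[μ] w)
    (hee : ∀ i ∈ s, ∀ j ∈ s, Integrable (fun x => e i x * e j x * w x) μ) (p : ι → ℝ) :
    0 ≤ ∑ i ∈ s, ∑ j ∈ s, p i * p j * ∫ x, e i x * e j x * w x ∂μ := by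
  rw [← integral_sum_mul_sq hee]
  exact integral_nonneg_of_ae (hw.mono fun x hx => mul_nonneg (sq_nonneg _) hx)

theorem integral_sub_sum_mul_sq {g : α → ℝ} (hg : Integrable (fun x => g x ^ 2 * w x) μ)
    (hge : ∀ j ∈ s, Integrable (fun x => g x * e j x * w x) μ)
    (hee : ∀ i ∈ s, ∀ j ∈ s, Integrable (fun x => e i x * e j x * w x) μ) (q : ι → ℝ) :
    ∫ x, (g x - ∑ j ∈ s, q j * e j x) ^ 2 * w x ∂μ =
      ∫ x, g x ^ 2 * w x ∂μ - 2 * ∑ j ∈ s, q j * ∫ x, g x * e j x * w x ∂μ +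
        ∑ i ∈ s, ∑ j ∈ s, q i * q j * ∫ x, e i x * e j x * w x ∂μ := by
  have hpt : ∀ x, (g x - ∑ j ∈ s, q j * e j x) ^ 2 * w x =
      g x ^ 2 * w x - 2 * ∑ j ∈ s, q j * (g x * e j x * w x) +
        (∑ j ∈ s, q j * e j x) ^ 2 * w x := by
    intro x
    have hcross : ∑ j ∈ s, q j * (g x * e j x * w x) = g x * (∑ j ∈ s, q j * e j x) * w x := by
      rw [mul_sum, sum_mul]
      exact sum_congr rfl fun j _ => by ring
    rw [hcross]
    ring
  have hcross : Integrable (fun x => 2 * ∑ j ∈ s, q j * (g x * e j x * w x)) μ :=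
    (integrable_finsetSum _ fun j hj => (hge j hj).const_mul _).const_mul 2
  have hdiff : Integrable
      (fun x => g x ^ 2 * w x - 2 * ∑ j ∈ s, q j * (g x * e j x * w x)) μ := hg.sub hcross
  simp only [hpt]
  rw [integral_add hdiff (integrable_sum_mul_sq hee q), integral_sub hg hcross,
    integral_const_mul,
    integral_finsetSum _ fun j hj => (hge j hj).const_mul _, integral_sum_mul_sq hee]
  simp only [integral_const_mul]

end GramExpansion

section PowerIntegrals

variable {R : ℝ}

lemma rpow_mul_rpow_mul_rpow_eqOn (hR : 0 ≤ R) (a b d : ℝ) :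
    EqOn (fun r : ℝ => r ^ a * r ^ b * r ^ d) (fun r => r ^ (a + b + d)) (Ioi R) := by
  intro r hr
  have hr : 0 < r := hR.trans_lt hr
  simp only [Real.rpow_add hr]

theorem integrableOn_Ioi_rpow_mul_rpow_mul_rpow (hR : 0 < R) {a b d : ℝ} (h : a + b + d < -1) :
    IntegrableOn (fun r : ℝ => r ^ a * r ^ b * r ^ d) (Ioi R) :=
  (integrableOn_Ioi_rpow_of_lt h hR).congr_fun (rpow_mul_rpow_mul_rpow_eqOn hR.le a b d).symm
    measurableSet_Ioi

theorem integral_Ioi_rpow_mul_rpow_mul_rpow (hR : 0 < R) {a b d : ℝ} (h : a + b + d < -1) :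
    ∫ r in Ioi R, r ^ a * r ^ b * r ^ d = -R ^ (a + b + d + 1) / (a + b + d + 1) := by
  rw [setIntegral_congr_fun measurableSet_Ioi (rpow_mul_rpow_mul_rpow_eqOn hR.le a b d),
    integral_Ioi_rpow_of_lt h hR]

lemma abs_mul_rpow_le {r : ℝ} (hr : 0 < r) (y m p : ℝ) :
    |y * r ^ p| ≤ (y ^ 2 * r ^ m + r ^ (2 * p - m)) / 2 := by
  have hsplit : r ^ p = r ^ (m / 2) * r ^ (p - m / 2) := by
    rw [← Real.rpow_add hr]; ring_nf
  have hu : (|y| * r ^ (m / 2)) ^ 2 = y ^ 2 * r ^ m := by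
    rw [mul_pow, sq_abs, ← Real.rpow_mul_natCast hr.le]; norm_num
  have hv : (r ^ (p - m / 2)) ^ 2 = r ^ (2 * p - m) := by
    rw [← Real.rpow_mul_natCast hr.le]; ring_nf
  rw [abs_mul, abs_of_pos (Real.rpow_pos_of_pos hr p), hsplit, ← mul_assoc, ← hu, ← hv]
  linarith [two_mul_le_add_sq (|y| * r ^ (m / 2)) (r ^ (p - m / 2))]

theorem integrableOn_Ioi_mul_rpow {g : ℝ → ℝ} (hR : 0 < R)
    (hg : AEStronglyMeasurable g (volume.restrict (Ioi R)))
    {m p : ℝ} (hg2 : IntegrableOn (fun r => g r ^ 2 * r ^ m) (Ioi R)) (hp : 2 * p - m < -1) :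
    IntegrableOn (fun r => g r * r ^ p) (Ioi R) := by
  refine Integrable.mono' ((hg2.add (integrableOn_Ioi_rpow_of_lt hp hR)).div_const 2)
    (hg.mul (by fun_prop : Measurable fun r : ℝ => r ^ p).aestronglyMeasurable) ?_
  filter_upwards [ae_restrict_mem measurableSet_Ioi] with r hr
  exact abs_mul_rpow_le (hR.trans hr) (g r) m p

end PowerIntegrals

noncomputable def cauchyNode (ν j : ℕ) : ℝ := ν / 2 + 1 - 2 * j

lemma cauchyNode_add (ν i j : ℕ) :
    cauchyNode ν i + cauchyNode ν j = (ν : ℝ) - 2 * i - 2 * j + 2 := by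
  unfold cauchyNode; ring

lemma cauchyNode_injective (ν : ℕ) : Function.Injective (cauchyNode ν) := by
  intro i j h
  unfold cauchyNode at h
  exact_mod_cast (by linarith : (i : ℝ) = j)

lemma cauchyNode_add_pos {ν i j : ℕ} (hν : Odd ν) (hi : i ≤ (ν + 2) / 4) (hj : j ≤ (ν + 2) / 4) :
    0 < cauchyNode ν i + cauchyNode ν j := by
  obtain ⟨k, rfl⟩ := hν
  have h : (2 * i + 2 * j : ℝ) < 2 * k + 1 + 2 := by
    exact_mod_cast (by omega : 2 * i + 2 * j < 2 * k + 1 + 2)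
  rw [cauchyNode_add]
  push_cast
  linarith

lemma cauchyWeight_image_cauchyNode (ν : ℕ) (t : Finset ℕ) (j : ℕ) :
    cauchyWeight (t.image (cauchyNode ν)) (cauchyNode ν j) =
      (∏ ℓ ∈ t, ((ν : ℝ) - 2 * ℓ - 2 * j + 2)) / ∏ ℓ ∈ t.erase j, (2 * (ℓ : ℝ) - 2 * j) := by
  have hinj := cauchyNode_injective ν
  rw [cauchyWeight, ← image_erase hinj, prod_image hinj.injOn, prod_image hinj.injOn]
  congr 1 <;> refine prod_congr rfl fun ℓ _ => ?_ <;> unfold cauchyNode <;> ring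

section PowerGram

variable {N ν : ℕ} {α R : ℝ}

noncomputable def powerGram (N : ℕ) (α R : ℝ) (i j : ℕ) : ℝ :=
  ∫ r in Ioi R, r ^ (α + 2 * (i : ℝ) - 2) * r ^ (α + 2 * (j : ℝ) - 2) * r ^ ((N : ℝ) - 1)

lemma powerGram_comm (N : ℕ) (α R : ℝ) (i j : ℕ) : powerGram N α R i j = powerGram N α R j i := by
  simp only [powerGram, mul_comm (_ ^ (α + 2 * (i : ℝ) - 2))]

lemma powerGram_exponent_add_one (hα : 2 * α = -((N : ℝ) - 2) - ν) (i j : ℕ) :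
    (α + 2 * (i : ℝ) - 2) + (α + 2 * (j : ℝ) - 2) + ((N : ℝ) - 1) + 1 =
      -(cauchyNode ν i + cauchyNode ν j) := by
  unfold cauchyNode
  linear_combination hα

lemma integrableOn_powerGram (hR : 0 < R) (hα : 2 * α = -((N : ℝ) - 2) - ν) {i j : ℕ}
    (hij : 0 < cauchyNode ν i + cauchyNode ν j) :
    IntegrableOn
      (fun r => r ^ (α + 2 * (i : ℝ) - 2) * r ^ (α + 2 * (j : ℝ) - 2) * r ^ ((N : ℝ) - 1))
      (Ioi R) :=
  integrableOn_Ioi_rpow_mul_rpow_mul_rpow hR (by linarith [powerGram_exponent_add_one hα i j])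

lemma powerGram_eq (hR : 0 < R) (hα : 2 * α = -((N : ℝ) - 2) - ν) {i j : ℕ}
    (hij : 0 < cauchyNode ν i + cauchyNode ν j) :
    powerGram N α R i j =
      R ^ (-(cauchyNode ν i + cauchyNode ν j)) / (cauchyNode ν i + cauchyNode ν j) := by
  rw [powerGram, integral_Ioi_rpow_mul_rpow_mul_rpow hR
    (by linarith [powerGram_exponent_add_one hα i j]), powerGram_exponent_add_one hα, neg_div_neg_eq]

variable {t : Finset ℕ}

lemma sum_sum_mul_powerGram_nonneg (hR : 0 < R) (hα : 2 * α = -((N : ℝ) - 2) - ν)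
    (hpos : ∀ i ∈ t, ∀ j ∈ t, 0 < cauchyNode ν i + cauchyNode ν j) (p : ℕ → ℝ) :
    0 ≤ ∑ i ∈ t, ∑ j ∈ t, p i * p j * powerGram N α R i j := by
  refine sum_sum_mul_integral_nonneg (e := fun (j : ℕ) r => r ^ (α + 2 * (j : ℝ) - 2))
    (w := fun r => r ^ ((N : ℝ) - 1)) ?_
    (fun i hi j hj => integrableOn_powerGram hR hα (hpos i hi j hj)) p
  filter_upwards [ae_restrict_mem measurableSet_Ioi] with r hr
  exact Real.rpow_nonneg (hR.trans hr).le _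

theorem sum_powerGram_mul_cauchyWeight (hR : 0 < R) (hα : 2 * α = -((N : ℝ) - 2) - ν)
    (hpos : ∀ i ∈ t, ∀ j ∈ t, 0 < cauchyNode ν i + cauchyNode ν j) {i m : ℕ}
    (hi : i ∈ t) (hm : m ∈ t) :
    ∑ j ∈ t, powerGram N α R i j *
        (cauchyWeight (t.image (cauchyNode ν)) (cauchyNode ν j) *
          cauchyWeight (t.image (cauchyNode ν)) (cauchyNode ν m) *
          (R ^ (cauchyNode ν j + cauchyNode ν m) / (cauchyNode ν j + cauchyNode ν m))) =
      if i = m then 1 else 0 := by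
  have hinj := cauchyNode_injective ν
  have hS : ∀ y ∈ t.image (cauchyNode ν), ∀ z ∈ t.image (cauchyNode ν), y + z ≠ 0 := by
    simp only [Finset.mem_image]
    rintro _ ⟨i, hi, rfl⟩ _ ⟨j, hj, rfl⟩
    exact (hpos i hi j hj).ne'
  have h := sum_rpow_div_mul_cauchyWeight hR hS (mem_image_of_mem _ hi) (mem_image_of_mem _ hm)
  rw [sum_image hinj.injOn] at h
  simp only [hinj.eq_iff] at h
  rw [← h]
  exact sum_congr rfl fun j hj => by rw [powerGram_eq hR hα (hpos i hi j hj)]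

theorem integral_sub_sum_rpow_sq (hR : 0 < R) (hα : 2 * α = -((N : ℝ) - 2) - ν) {c : ℝ}
    (hcα : c = α + ((N : ℝ) - 2))
    (hpos : ∀ i ∈ t, ∀ j ∈ t, 0 < cauchyNode ν i + cauchyNode ν j) {g : ℝ → ℝ}
    (hg : IntegrableOn (fun r => g r ^ 2 * r ^ ((N : ℝ) - 1)) (Ioi R))
    (hb : ∀ j ∈ t, IntegrableOn (fun r => g r * r ^ (c + 2 * (j : ℝ) - 1)) (Ioi R))
    (q : ℕ → ℝ) :
    ∫ r in Ioi R, (g r - ∑ j ∈ t, q j * r ^ (α + 2 * (j : ℝ) - 2)) ^ 2 * r ^ ((N : ℝ) - 1) =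
      (∫ r in Ioi R, g r ^ 2 * r ^ ((N : ℝ) - 1)) -
        2 * ∑ j ∈ t, q j * (∫ r in Ioi R, g r * r ^ (c + 2 * (j : ℝ) - 1)) +
        ∑ i ∈ t, ∑ j ∈ t, q i * q j * powerGram N α R i j := by
  have hcomb : ∀ j : ℕ, EqOn (fun r => g r * r ^ (α + 2 * (j : ℝ) - 2) * r ^ ((N : ℝ) - 1))
      (fun r => g r * r ^ (c + 2 * (j : ℝ) - 1)) (Ioi R) := by
    intro j r hr
    simp only [mul_assoc, ← Real.rpow_add (hR.trans hr)]
    congr 2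
    linear_combination -hcα
  have hb_eq : ∀ j : ℕ,
      ∫ r in Ioi R, g r * r ^ (α + 2 * (j : ℝ) - 2) * r ^ ((N : ℝ) - 1) =
        ∫ r in Ioi R, g r * r ^ (c + 2 * (j : ℝ) - 1) :=
    fun j => setIntegral_congr_fun measurableSet_Ioi (hcomb j)
  rw [integral_sub_sum_mul_sq (e := fun (j : ℕ) r => r ^ (α + 2 * (j : ℝ) - 2)) hg
    (fun j hj => (hb j hj).congr_fun (hcomb j).symm measurableSet_Ioi)
    (fun i hi j hj => integrableOn_powerGram hR hα (hpos i hi j hj)) q]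
  simp only [hb_eq, powerGram]

end PowerGram

theorem projection_formula_L2_component_general
    (N : ℕ) (β c α : ℝ)
    (hc : c = ((N : ℝ) - 2) * (1 - β) / 2)
    (hα : α = -(((N : ℝ) - 2) * (1 + β)) / 2)
    (ν : ℕ) (hνodd : Odd ν) (hνβ : ((N : ℝ) - 2) * β = (ν : ℝ))
    (R : ℝ) (hR : 0 < R)
    (k₁ : ℕ) (hk₁ : k₁ = (ν + 2) / 4)
    (ctil : ℕ → ℝ)
    (hctil : ∀ j : ℕ, ctil j =
      (∏ ℓ ∈ Finset.Icc 1 k₁, ((ν : ℝ) - 2 * (ℓ : ℝ) - 2 * (j : ℝ) + 2)) /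
        (∏ ℓ ∈ (Finset.Icc 1 k₁).erase j, (2 * (ℓ : ℝ) - 2 * (j : ℝ))))
    (g : ℝ → ℝ)
    (hgm : AEStronglyMeasurable g (volume.restrict (Set.Ioi R)))
    (hgL2 : IntegrableOn (fun r => g r ^ 2 * r ^ ((N : ℝ) - 1)) (Set.Ioi R)) :
    (∀ i ∈ Finset.Icc 1 k₁,
      IntegrableOn (fun r => g r * r ^ (c + 2 * (i : ℝ) - 1)) (Set.Ioi R)) ∧
    (⨅ q : ℕ → ℝ, ∫ r in Set.Ioi R,
        (g r - ∑ j ∈ Finset.Icc 1 k₁, q j * r ^ (α + 2 * (j : ℝ) - 2)) ^ 2 *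
          r ^ ((N : ℝ) - 1))
      = (∫ r in Set.Ioi R, g r ^ 2 * r ^ ((N : ℝ) - 1))
        - ∑ i ∈ Finset.Icc 1 k₁, ∑ j ∈ Finset.Icc 1 k₁,
            ctil i * ctil j *
              (R ^ ((ν : ℝ) - 2 * (i : ℝ) - 2 * (j : ℝ) + 2) /
                ((ν : ℝ) - 2 * (i : ℝ) - 2 * (j : ℝ) + 2)) *
              (∫ r in Set.Ioi R, g r * r ^ (c + 2 * (i : ℝ) - 1)) *
              (∫ r in Set.Ioi R, g r * r ^ (c + 2 * (j : ℝ) - 1)) := by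
  set s := Finset.Icc 1 k₁
  have hα2 : 2 * α = -((N : ℝ) - 2) - ν := by linear_combination 2 * hα - hνβ
  have hcα : c = α + ((N : ℝ) - 2) := by linear_combination hc - hα
  have hpos : ∀ i ∈ s, ∀ j ∈ s, 0 < cauchyNode ν i + cauchyNode ν j := fun i hi j hj =>
    cauchyNode_add_pos hνodd (hk₁ ▸ (Finset.mem_Icc.1 hi).2) (hk₁ ▸ (Finset.mem_Icc.1 hj).2)
  have hb : ∀ i ∈ s, IntegrableOn (fun r => g r * r ^ (c + 2 * (i : ℝ) - 1)) (Ioi R) :=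
    fun i hi => integrableOn_Ioi_mul_rpow hR hgm hgL2
      (by linarith [hpos i hi i hi, cauchyNode_add ν i i])
  have hM : ∀ j m : ℕ, ctil j * ctil m *
      (R ^ ((ν : ℝ) - 2 * j - 2 * m + 2) / ((ν : ℝ) - 2 * j - 2 * m + 2)) =
        cauchyWeight (s.image (cauchyNode ν)) (cauchyNode ν j) *
          cauchyWeight (s.image (cauchyNode ν)) (cauchyNode ν m) *
          (R ^ (cauchyNode ν j + cauchyNode ν m) / (cauchyNode ν j + cauchyNode ν m)) := by
    intro j m
    rw [hctil, hctil, cauchyWeight_image_cauchyNode, cauchyWeight_image_cauchyNode, cauchyNode_add]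
  refine ⟨hb, ?_⟩
  simp only [integral_sub_sum_rpow_sq hR hα2 hcα hpos hgL2 hb]
  refine ciInf_quadratic_eq s _ (fun i _ j _ => powerGram_comm N α R i j)
    (sum_sum_mul_powerGram_nonneg hR hα2 hpos) (fun i hi m hm => ?_) _ _
  rw [sum_congr rfl fun j _ => congrArg _ (hM j m)]
  exact sum_powerGram_mul_cauchyWeight hR hα2 hpos hi hm

/-- Explicit formula for the squared `L²((R,∞), r^{N-1}dr)` distance of `g` to
the span of the powers `r^{α+2j-2}`, `1 ≤ j ≤ k₁`, via the inverse Cauchy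
matrix coefficients `c̃_j`. -/
theorem projection_formula_L2_component
    (N : ℕ) (hN : 3 ≤ N) (a : ℝ) (ha : 0 < a)
    (β c α : ℝ)
    (hβ : β = Real.sqrt (1 + 4 * a / ((N : ℝ) - 2) ^ 2))
    (hc : c = ((N : ℝ) - 2) * (1 - β) / 2)
    (hα : α = -(((N : ℝ) - 2) * (1 + β)) / 2)
    (ν : ℕ) (hνodd : Odd ν) (hνpos : 0 < ν) (hνβ : ((N : ℝ) - 2) * β = (ν : ℝ))
    (R : ℝ) (hR : 0 < R)
    (k₁ : ℕ) (hk₁ : k₁ = (ν + 2) / 4)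
    (ctil : ℕ → ℝ)
    (hctil : ∀ j : ℕ, ctil j =
      (∏ ℓ ∈ Finset.Icc 1 k₁, ((ν : ℝ) - 2 * (ℓ : ℝ) - 2 * (j : ℝ) + 2)) /
        (∏ ℓ ∈ (Finset.Icc 1 k₁).erase j, (2 * (ℓ : ℝ) - 2 * (j : ℝ))))
    (g : ℝ → ℝ)
    (hgm : AEStronglyMeasurable g (volume.restrict (Set.Ioi R)))
    (hgL2 : IntegrableOn (fun r => g r ^ 2 * r ^ ((N : ℝ) - 1)) (Set.Ioi R)) :
    (∀ i ∈ Finset.Icc 1 k₁,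
      IntegrableOn (fun r => g r * r ^ (c + 2 * (i : ℝ) - 1)) (Set.Ioi R)) ∧
    (⨅ q : ℕ → ℝ, ∫ r in Set.Ioi R,
        (g r - ∑ j ∈ Finset.Icc 1 k₁, q j * r ^ (α + 2 * (j : ℝ) - 2)) ^ 2 *
          r ^ ((N : ℝ) - 1))
      = (∫ r in Set.Ioi R, g r ^ 2 * r ^ ((N : ℝ) - 1))
        - ∑ i ∈ Finset.Icc 1 k₁, ∑ j ∈ Finset.Icc 1 k₁,
            ctil i * ctil j *
              (R ^ ((ν : ℝ) - 2 * (i : ℝ) - 2 * (j : ℝ) + 2) /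
                ((ν : ℝ) - 2 * (i : ℝ) - 2 * (j : ℝ) + 2)) *
              (∫ r in Set.Ioi R, g r * r ^ (c + 2 * (i : ℝ) - 1)) *
              (∫ r in Set.Ioi R, g r * r ^ (c + 2 * (j : ℝ) - 1)) :=
  projection_formula_L2_component_general N β c α hc hα ν hνodd hνβ R hR k₁ hk₁ ctil hctil g hgm
    hgL2
end
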